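/- arXiv:2602.05457 — 7 statements merged into one kernel-verified Lean document; each statement's English description precedes it below -/
import Mathlib

section
/- Let (P) have finitely many constraints, i.e. (P): inf f_0(x) subject to f_k(x) ≤ 0 for k = 1,…,m, x ∈ X, where f_0, f_1,…,f_m : X → ℝ ∪ {+∞} are proper convex functions. Assume each f_k (k = 1,…,m) is finite-valued and continuous at some point of dom f_0, and that the Slater condition holds: there exists x_0 ∈ dom f_0 with max_{1≤k≤m} f_k(x_0) < 0. Then the optimal values of (P) and of its biconjugate relaxation coincide: inf{ f_0(x) : f_k(x) ≤ 0 for k = 1,…,m, x ∈ X } = inf{ f_0**(z) : f_k**(z) ≤ 0 for k = 1,…,m, z ∈ X** }. -/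
/-!
The relaxation can only lower the value, because the canonical image of a feasible `x` is
feasible in the bidual and `g** ∘ ι ≤ g`. Conversely, fix `z` with `fₖ**(z) ≤ 0` and a real `c`
below the primal value. Separating in `ℝᵐ × ℝ` the strict upper bounds of the values
`(f₁, …, fₘ, f₀)` from the point `(0, c)`, Slater's condition produces multipliers `λₖ ≥ 0` with
`c ≤ f₀ + ∑ λₖ fₖ` (with `0 · (+∞) = +∞`). Since every `λₖ fₖ` is continuous at a point of
`dom f₀`, iterated Hahn–Banach sandwiching splits the constant `c` into continuous affine minorants
`aₖ` of the `λₖ fₖ` and `c - ∑ aₖ` of `f₀`. Affine minorants of a function minorize its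
biconjugate, and `fₖ**(z) ≤ 0` makes the canonical extension of each `aₖ` nonpositive at `z` (when
`λₖ = 0` one adds large multiples of `aₖ` to an affine minorant of `fₖ`). Hence `f₀**(z) ≥ c`.
-/

open Filter Topology Set NormedSpace
open scoped Classical

noncomputable section

/-- Effective domain of an extended-real-valued function. -/
def edom {Z : Type*} (g : Z → EReal) : Set Z := {z | g z ≠ ⊤}

/-- Indicator function of a set, with values in `EReal`. -/
def eindicator {Z : Type*} (A : Set Z) : Z → EReal := fun z => if z ∈ A then 0 else ⊤

/-- Scalar multiplication of an `EReal` value by a nonnegative real, with the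
convention `0 · (+∞) = +∞`. -/
def smulInf (a : ℝ) (v : EReal) : EReal := if v = ⊤ then ⊤ else (a : EReal) * v

variable {X : Type*} [NormedAddCommGroup X] [NormedSpace ℝ X]

/-- Convexity for `EReal`-valued functions. -/
def ConvexER (g : X → EReal) : Prop :=
  ∀ x y : X, ∀ a b : ℝ, 0 ≤ a → 0 ≤ b → a + b = 1 →
    g (a • x + b • y) ≤ (a : EReal) * g x + (b : EReal) * g y

/-- Properness: not identically `+∞`, and nowhere `-∞` (so the function maps into `ℝ ∪ {+∞}`). -/
def ProperER (g : X → EReal) : Prop := (∃ x, g x ≠ ⊤) ∧ ∀ x, g x ≠ ⊥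

/-- Fenchel conjugate of `g : X → EReal`, defined on the topological dual. -/
def fconj (g : X → EReal) : StrongDual ℝ X → EReal :=
  fun p => ⨆ x : X, (p x : EReal) - g x

/-- Fenchel biconjugate of `g : X → EReal`, defined on the bidual. -/
def fbiconj (g : X → EReal) : StrongDual ℝ (StrongDual ℝ X) → EReal :=
  fun z => ⨆ p : StrongDual ℝ X, (z p : EReal) - fconj g p

/-- Closure with respect to the weak-* topology `σ(E*, E)` on a dual space. -/
def wstarClosure {E : Type*} [NormedAddCommGroup E] [NormedSpace ℝ E]
    (A : Set (StrongDual ℝ E)) : Set (StrongDual ℝ E) :=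
  StrongDual.toWeakDual ⁻¹' closure (StrongDual.toWeakDual '' A)

theorem nonpos_of_forall_add_mul_le {a b K : ℝ} (h : ∀ t > 0, a + t * b ≤ K) : b ≤ 0 := by
  by_contra! hb
  have := h ((|K - a| + 1) / b) (by positivity)
  rw [div_mul_cancel₀ _ hb.ne'] at this
  linarith [le_abs_self (K - a)]

theorem le_of_forall_pos_lt_add_mul {a b C : ℝ} (h : ∀ ε > 0, a < b + ε * C) : a ≤ b := by
  have hcont : Continuous fun ε : ℝ => b + ε * C := by fun_prop
  have hlim : Tendsto (fun ε => b + ε * C) (𝓝[>] 0) (𝓝 b) := by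
    simpa using (hcont.tendsto 0).mono_left nhdsWithin_le_nhds
  exact ge_of_tendsto hlim (eventually_nhdsWithin_of_forall fun ε hε => (h ε hε).le)

theorem EReal.coe_sum {ι : Type*} (s : Finset ι) (f : ι → ℝ) :
    ((∑ i ∈ s, f i : ℝ) : EReal) = ∑ i ∈ s, (f i : EReal) :=
  map_sum (⟨⟨Real.toEReal, EReal.coe_zero⟩, EReal.coe_add⟩ : ℝ →+ EReal) f s

theorem EReal.sum_ne_bot {ι : Type*} {s : Finset ι} {f : ι → EReal} (h : ∀ i ∈ s, f i ≠ ⊥) :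
    ∑ i ∈ s, f i ≠ ⊥ :=
  Finset.sum_induction f (· ≠ ⊥) (fun _ _ ha hb => EReal.add_ne_bot_iff.2 ⟨ha, hb⟩)
    EReal.zero_ne_bot h

theorem EReal.sum_eq_top {ι : Type*} {s : Finset ι} {f : ι → EReal} (h : ∀ i ∈ s, f i ≠ ⊥)
    {j : ι} (hj : j ∈ s) (hfj : f j = ⊤) : ∑ i ∈ s, f i = ⊤ := by
  rw [← Finset.add_sum_erase s f hj, hfj,
    EReal.top_add_of_ne_bot (EReal.sum_ne_bot fun i hi => h i (Finset.mem_of_mem_erase hi))]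

@[simp] theorem smulInf_top (a : ℝ) : smulInf a ⊤ = ⊤ := if_pos rfl

@[simp] theorem smulInf_coe (a r : ℝ) : smulInf a r = ((a * r : ℝ) : EReal) := by
  simp [smulInf]

theorem smulInf_ne_bot (a : ℝ) {v : EReal} (hv : v ≠ ⊥) : smulInf a v ≠ ⊥ := by
  rcases eq_or_ne v ⊤ with rfl | hv'
  · simp
  · rw [← EReal.coe_toReal hv' hv, smulInf_coe]
    exact EReal.coe_ne_bot _

theorem smulInf_ne_top (a : ℝ) {v : EReal} (hv : v ≠ ⊤) (hv' : v ≠ ⊥) : smulInf a v ≠ ⊤ := by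
  rw [← EReal.coe_toReal hv hv', smulInf_coe]
  exact EReal.coe_ne_top _

theorem smulInf_of_pos {a : ℝ} (ha : 0 < a) (v : EReal) : smulInf a v = a * v := by
  induction v using EReal.rec <;> simp [smulInf, EReal.coe_mul_top_of_pos ha]

theorem smulInf_zero_comp {Z : Type*} (g : Z → EReal) :
    (fun x => smulInf 0 (g x)) = eindicator (edom g) := by
  funext x
  by_cases h : g x = ⊤ <;> simp [smulInf, eindicator, edom, h]

theorem continuousAt_smulInf (a : ℝ) {v : EReal} (ht : v ≠ ⊤) (hb : v ≠ ⊥) :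
    ContinuousAt (smulInf a) v := by
  have hfin : ∀ᶠ w in 𝓝 v, ((a * w.toReal : ℝ) : EReal) = smulInf a w := by
    filter_upwards [eventually_ne_nhds ht, eventually_ne_nhds hb] with w ht hb
    rw [← smulInf_coe, EReal.coe_toReal ht hb]
  refine ContinuousAt.congr ?_ hfin
  exact continuous_coe_real_ereal.continuousAt.comp
    (continuousAt_const.mul (EReal.tendsto_toReal ht hb))

theorem ConvexER.apply_combo_le {g : X → EReal} (hg : ConvexER g) {x y : X} {u v : EReal}
    (hx : g x ≤ u) (hy : g y ≤ v) {a b : ℝ} (ha : 0 ≤ a) (hb : 0 ≤ b) (hab : a + b = 1) :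
    g (a • x + b • y) ≤ a * u + b * v :=
  (hg x y a b ha hb hab).trans <| add_le_add
    (mul_le_mul_of_nonneg_left hx (EReal.coe_nonneg.2 ha))
    (mul_le_mul_of_nonneg_left hy (EReal.coe_nonneg.2 hb))

theorem ConvexER.apply_combo_lt {g : X → EReal} (hg : ConvexER g) {x y : X} {u v : ℝ}
    (hx : g x < u) (hy : g y < v) {a b : ℝ} (ha : 0 ≤ a) (hb : 0 ≤ b) (hab : a + b = 1) :
    g (a • x + b • y) < ((a * u + b * v : ℝ) : EReal) := by
  obtain ⟨u', hxu', hu'⟩ := EReal.exists_between_coe_real hx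
  obtain ⟨v', hyv', hv'⟩ := EReal.exists_between_coe_real hy
  rw [EReal.coe_lt_coe_iff] at hu' hv'
  calc g (a • x + b • y) ≤ ((a * u' + b * v' : ℝ) : EReal) := by
        simpa using hg.apply_combo_le hxu'.le hyv'.le ha hb hab
    _ < ((a * u + b * v : ℝ) : EReal) := by
        rw [EReal.coe_lt_coe_iff]
        rcases ha.eq_or_lt with rfl | ha
        · simp only [zero_add] at hab
          simp [hab, hv']
        · nlinarith [mul_pos ha (sub_pos.2 hu'), mul_nonneg hb (sub_nonneg.2 hv'.le)]

theorem ConvexER.convex_edom {g : X → EReal} (hg : ConvexER g) : Convex ℝ (edom g) := by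
  intro x hx y hy a b ha hb hab
  obtain ⟨u, hu, -⟩ := EReal.exists_between_coe_real (lt_top_iff_ne_top.2 hx)
  obtain ⟨v, hv, -⟩ := EReal.exists_between_coe_real (lt_top_iff_ne_top.2 hy)
  exact ne_top_of_lt (hg.apply_combo_lt hu hv ha hb hab)

theorem convexER_of_pos {g : X → EReal}
    (h : ∀ x y : X, ∀ a b : ℝ, 0 < a → 0 < b → a + b = 1 →
      g (a • x + b • y) ≤ (a : EReal) * g x + (b : EReal) * g y) : ConvexER g := by
  intro x y a b ha hb hab
  rcases ha.eq_or_lt with rfl | ha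
  · obtain rfl : b = 1 := by linarith
    simp
  rcases hb.eq_or_lt with rfl | hb
  · obtain rfl : a = 1 := by linarith
    simp
  exact h x y a b ha hb hab

theorem convexER_eindicator {s : Set X} (hs : Convex ℝ s) : ConvexER (eindicator s) := by
  refine convexER_of_pos fun x y a b ha hb hab => ?_
  by_cases hx : x ∈ s <;> by_cases hy : y ∈ s
  · simp [eindicator, hx, hy, hs hx hy ha.le hb.le hab]
  all_goals simp [eindicator, hx, hy, EReal.coe_mul_top_of_pos ha, EReal.coe_mul_top_of_pos hb]

theorem ConvexER.add {F G : X → EReal} (hF : ConvexER F) (hG : ConvexER G) :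
    ConvexER fun x => F x + G x := fun x y a b ha hb hab => by
  calc F (a • x + b • y) + G (a • x + b • y)
      ≤ (a * F x + b * F y) + (a * G x + b * G y) :=
        add_le_add (hF x y a b ha hb hab) (hG x y a b ha hb hab)
    _ = a * (F x + G x) + b * (F y + G y) := by
      rw [EReal.left_distrib_of_nonneg_of_ne_top (EReal.coe_nonneg.2 ha) (EReal.coe_ne_top a),
        EReal.left_distrib_of_nonneg_of_ne_top (EReal.coe_nonneg.2 hb) (EReal.coe_ne_top b),
        add_add_add_comm]

theorem ConvexER.const_mul {g : X → EReal} (hg : ConvexER g) {c : ℝ} (hc : 0 ≤ c) :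
    ConvexER fun x => (c : EReal) * g x := fun x y a b ha hb hab => by
  calc (c : EReal) * g (a • x + b • y) ≤ c * (a * g x + b * g y) :=
        mul_le_mul_of_nonneg_left (hg x y a b ha hb hab) (EReal.coe_nonneg.2 hc)
    _ = a * (c * g x) + b * (c * g y) := by
      rw [EReal.left_distrib_of_nonneg_of_ne_top (EReal.coe_nonneg.2 hc) (EReal.coe_ne_top c),
        mul_left_comm, mul_left_comm (c : EReal)]

theorem ConvexER.smulInf {g : X → EReal} (hg : ConvexER g) {a : ℝ} (ha : 0 ≤ a) :
    ConvexER fun x => smulInf a (g x) := by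
  rcases ha.eq_or_lt with rfl | ha
  · rw [smulInf_zero_comp]
    exact convexER_eindicator hg.convex_edom
  · simpa only [smulInf_of_pos ha] using hg.const_mul ha.le

theorem ConvexER.convex_strictEpigraph {g : X → EReal} (hg : ConvexER g) :
    Convex ℝ {w : X × ℝ | g w.1 < w.2} := fun w hw w' hw' a b ha hb hab => by
  simpa using hg.apply_combo_lt hw hw' ha hb hab

theorem ConvexER.convex_setOf_le_affine {g : X → EReal} (hg : ConvexER g) (q : StrongDual ℝ X)
    (c : ℝ) : Convex ℝ {w : X × ℝ | g w.1 ≤ ((q w.1 + c - w.2 : ℝ) : EReal)} :=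
  fun w hw w' hw' a b ha hb hab => by
    have h := hg.apply_combo_le hw hw' ha hb hab
    show g (a • w.1 + b • w'.1) ≤
      ((q (a • w.1 + b • w'.1) + c - (a * w.2 + b * w'.2) : ℝ) : EReal)
    convert h using 1
    norm_cast
    simp only [map_add, map_smul, smul_eq_mul]
    linear_combination (-c) * hab

def IsAffineMinorant (g : X → EReal) (p : StrongDual ℝ X) (β : ℝ) : Prop :=
  ∀ x, ((p x + β : ℝ) : EReal) ≤ g x

theorem isAffineMinorant_iff {g : X → EReal} (hg : ∀ x, g x ≠ ⊥) {p : StrongDual ℝ X} {β : ℝ} :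
    IsAffineMinorant g p β ↔ ∀ x (r : ℝ), g x = r → p x + β ≤ r := by
  refine ⟨fun h x r hr => EReal.coe_le_coe_iff.1 (hr ▸ h x), fun h x => ?_⟩
  rcases eq_or_ne (g x) ⊤ with hx | hx
  · simp [hx]
  · rw [← EReal.coe_toReal hx (hg x), EReal.coe_le_coe_iff]
    exact h x _ (EReal.coe_toReal hx (hg x)).symm

theorem IsAffineMinorant.le_fbiconj {g : X → EReal} {p : StrongDual ℝ X} {β : ℝ}
    (h : IsAffineMinorant g p β) (z : StrongDual ℝ (StrongDual ℝ X)) :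
    ((z p + β : ℝ) : EReal) ≤ fbiconj g z := by
  have hconj : fconj g p ≤ ((-β : ℝ) : EReal) := iSup_le fun x => by
    have := h x
    generalize g x = v at this ⊢
    induction v using EReal.rec <;> simp_all [← EReal.coe_sub]
    norm_cast at *
    linarith
  calc ((z p + β : ℝ) : EReal) = (z p : EReal) - ((-β : ℝ) : EReal) := by simp [sub_eq_add_neg]
    _ ≤ (z p : EReal) - fconj g p := EReal.sub_le_sub le_rfl hconj
    _ ≤ fbiconj g z := le_iSup (fun q => (z q : EReal) - fconj g q) p

theorem fbiconj_inclusionInDoubleDual_le (g : X → EReal) (x : X) :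
    fbiconj g (inclusionInDoubleDual ℝ X x) ≤ g x := by
  refine iSup_le fun p => ?_
  have h : (p x : EReal) - g x ≤ fconj g p := le_iSup (fun y => (p y : EReal) - g y) x
  rw [dual_def]
  generalize g x = v at h ⊢
  generalize fconj g p = w at h ⊢
  induction v using EReal.rec <;> induction w using EReal.rec <;> simp_all [← EReal.coe_sub]
  linarith

theorem iInf_fbiconj_le_iInf {ι : Type*} (f₀ : X → EReal) (f : ι → X → EReal) :
    (⨅ z ∈ {z : StrongDual ℝ (StrongDual ℝ X) | ∀ k, fbiconj (f k) z ≤ 0}, fbiconj f₀ z) ≤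
      ⨅ x ∈ {x : X | ∀ k, f k x ≤ 0}, f₀ x :=
  le_iInf₂ fun x hx => iInf₂_le_of_le (inclusionInDoubleDual ℝ X x)
    (fun k => (fbiconj_inclusionInDoubleDual_le (f k) x).trans (hx k))
    (fbiconj_inclusionInDoubleDual_le f₀ x)

theorem IsAffineMinorant.exists_split {F G : X → EReal} {q : StrongDual ℝ X} {c : ℝ}
    (h : IsAffineMinorant (fun x => F x + G x) q c) (hF : ConvexER F) (hG : ConvexER G)
    {x₁ : X} (hFx₁ : F x₁ ≠ ⊤) (hGx₁ : G x₁ ≠ ⊤) (hGc : ContinuousAt G x₁) :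
    ∃ p β, IsAffineMinorant G p β ∧ IsAffineMinorant F (q - p) (c - β) := by
  replace h : ∀ x, ((q x + c : ℝ) : EReal) ≤ F x + G x := h
  have hFb : ∀ x, F x ≠ ⊥ := fun x hx => by simpa [hx] using h x
  set A := {w : X × ℝ | G w.1 < w.2}
  set B := {w : X × ℝ | F w.1 ≤ ((q w.1 + c - w.2 : ℝ) : EReal)}
  have hAB : Disjoint A B := by
    refine Set.disjoint_left.2 fun w (hA : G w.1 < w.2) (hB : F w.1 ≤ _) => ?_
    have := (h w.1).trans_lt (by
      rw [add_comm]; exact EReal.add_lt_add_of_lt_of_le hA hB (hFb w.1) (EReal.coe_ne_top _))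
    norm_cast at this
    linarith
  obtain ⟨M, hM, -⟩ := EReal.exists_between_coe_real (lt_top_iff_ne_top.2 hGx₁)
  have hint : ((x₁, M + 1) : X × ℝ) ∈ interior A := by
    refine mem_interior_iff_mem_nhds.2 (mem_of_superset (prod_mem_nhds
      (hGc.preimage_mem_nhds (Iio_mem_nhds hM)) (Ioi_mem_nhds (lt_add_one M))) ?_)
    exact fun w hw => hw.1.trans (EReal.coe_lt_coe_iff.2 hw.2)
  -- The separating hyperplane, once shown to be non-vertical, is the graph of the affine
  -- minorant of `G`.
  obtain ⟨φ, u, hφA, hφB⟩ := geometric_hahn_banach_open (hG.convex_strictEpigraph.interior)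
    isOpen_interior (hF.convex_setOf_le_affine q c) (hAB.mono_left interior_subset)
  have hφA' : ∀ w ∈ A, φ w ≤ u := by
    have := closure_minimal (fun w hw => (hφA w hw).le) (isClosed_le φ.continuous continuous_const)
    rw [hG.convex_strictEpigraph.closure_interior_eq_closure_of_nonempty_interior ⟨_, hint⟩] at this
    exact fun w hw => this (subset_closure hw)
  set ψ := φ.comp (ContinuousLinearMap.inl ℝ X ℝ)
  set σ := -φ (0, 1)
  have hφ : ∀ x t, φ (x, t) = ψ x - t * σ := fun x t => by
    rw [show ((x, t) : X × ℝ) = (x, 0) + t • (0, 1) by simp, map_add, map_smul]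
    simp [ψ, σ]
  obtain ⟨r₁, hr₁⟩ : ∃ r : ℝ, F x₁ = r := ⟨_, (EReal.coe_toReal hFx₁ (hFb x₁)).symm⟩
  -- Over `x₁`, the interior point `(x₁, M + 1)` of `A` lies strictly above a point of `B`.
  have hσ : 0 < σ := by
    have hA := hφA _ hint
    have hB := hφB (x₁, q x₁ + c - r₁) (by
      show F x₁ ≤ ((q x₁ + c - (q x₁ + c - r₁) : ℝ) : EReal)
      rw [sub_sub_cancel, hr₁])
    have hM' : ((q x₁ + c : ℝ) : EReal) < r₁ + M :=
      (h x₁).trans_lt (hr₁ ▸ EReal.add_lt_add_left_coe hM r₁)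
    norm_cast at hM'
    rw [hφ] at hA hB
    nlinarith
  have hp : ∀ x, (σ⁻¹ • ψ) x + -(σ⁻¹ * u) = (ψ x - u) / σ := fun x => by
    rw [smul_apply, smul_eq_mul]
    ring
  refine ⟨σ⁻¹ • ψ, -(σ⁻¹ * u), fun x => ?_, (isAffineMinorant_iff hFb).2 fun x r hr => ?_⟩
  · refine EReal.le_of_forall_lt_iff_le.1 fun t ht => ?_
    have hxt := hφ x t ▸ hφA' (x, t) ht
    rw [hp, EReal.coe_le_coe_iff, div_le_iff₀ hσ]
    linarith
  · have hxr := hφ x _ ▸ hφB (x, q x + c - r)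
      (show F x ≤ ((q x + c - (q x + c - r) : ℝ) : EReal) by rw [sub_sub_cancel, hr])
    have : q x + c - r ≤ (ψ x - u) / σ := by rw [le_div_iff₀ hσ]; linarith
    rw [sub_apply]
    linarith [hp x]

theorem IsAffineMinorant.exists_split_sum : ∀ {n : ℕ} {F : X → EReal} {G : Fin n → X → EReal}
    {q : StrongDual ℝ X} {c : ℝ}, IsAffineMinorant (fun x => F x + ∑ k, G k x) q c →
    ConvexER F → (∀ k, ConvexER (G k)) → ∀ {x₁ : X}, F x₁ ≠ ⊤ → (∀ k, G k x₁ ≠ ⊤) →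
    (∀ k, ContinuousAt (G k) x₁) →
    ∃ (p : Fin n → StrongDual ℝ X) (β : Fin n → ℝ), (∀ k, IsAffineMinorant (G k) (p k) (β k)) ∧
      IsAffineMinorant F (q - ∑ k, p k) (c - ∑ k, β k)
  | 0, F, G, q, c, h, _, _, _, _, _, _ => ⟨fun _ => 0, fun _ => 0, finZeroElim, by simpa using h⟩
  | n + 1, F, G, q, c, h, hF, hG, x₁, hFx₁, hGx₁, hGc => by
    have h' : IsAffineMinorant (fun x => (F x + G 0 x) + ∑ k : Fin n, G k.succ x) q c := by
      simpa only [Fin.sum_univ_succ, add_assoc] using h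
    obtain ⟨p, β, hp, hF₀⟩ := h'.exists_split_sum (hF.add (hG 0)) (fun k => hG k.succ)
      (EReal.add_ne_top hFx₁ (hGx₁ 0)) (fun k => hGx₁ k.succ) (fun k => hGc k.succ)
    obtain ⟨p₀, β₀, hp₀, hF'⟩ := hF₀.exists_split hF (hG 0) hFx₁ (hGx₁ 0) (hGc 0)
    refine ⟨Fin.cons p₀ p, Fin.cons β₀ β, Fin.cases hp₀ hp, ?_⟩
    simpa only [Fin.sum_cons, sub_add_eq_sub_sub_swap] using hF'

theorem ConvexER.exists_isAffineMinorant {g : X → EReal} (hg : ConvexER g) (hgb : ∀ x, g x ≠ ⊥)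
    {x₁ : X} (hgx₁ : g x₁ ≠ ⊤) (hgc : ContinuousAt g x₁) : ∃ q A, IsAffineMinorant g q A := by
  -- Split the constant minorant `g x₁` of `eindicator {x₁} + g`.
  have h : IsAffineMinorant (fun x => eindicator {x₁} x + g x) 0 (g x₁).toReal := fun x => by
    by_cases hx : x = x₁
    · simp [hx, eindicator, EReal.coe_toReal hgx₁ (hgb x₁)]
    · simp [hx, eindicator, EReal.top_add_of_ne_bot (hgb x)]
  obtain ⟨q, A, hq, -⟩ := h.exists_split (convexER_eindicator (convex_singleton x₁)) hg
    (by simp [eindicator]) hgx₁ hgc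
  exact ⟨q, A, hq⟩

theorem IsAffineMinorant.of_smulInf {f : X → EReal} (hf : ∀ x, f x ≠ ⊥) {a : ℝ} (ha : 0 < a)
    {p : StrongDual ℝ X} {β : ℝ} (h : IsAffineMinorant (fun x => smulInf a (f x)) p β) :
    IsAffineMinorant f (a⁻¹ • p) (a⁻¹ * β) := by
  refine (isAffineMinorant_iff hf).2 fun x r hr => ?_
  have hx : p x + β ≤ a * r := by
    have := h x
    simp only [hr, smulInf_coe] at this
    exact_mod_cast this
  rw [smul_apply, smul_eq_mul, ← mul_add, inv_mul_le_iff₀ ha]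
  exact hx

theorem IsAffineMinorant.add_smul_of_smulInf_zero {f : X → EReal} (hf : ∀ x, f x ≠ ⊥)
    {q : StrongDual ℝ X} {A : ℝ} (hq : IsAffineMinorant f q A) {p : StrongDual ℝ X} {β : ℝ}
    (h : IsAffineMinorant (fun x => smulInf 0 (f x)) p β) {t : ℝ} (ht : 0 ≤ t) :
    IsAffineMinorant f (q + t • p) (A + t * β) := by
  refine (isAffineMinorant_iff hf).2 fun x r hr => ?_
  have hpx : p x + β ≤ 0 := by
    have := h x
    simp only [hr, smulInf_coe, zero_mul] at this
    exact_mod_cast this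
  have hqx : q x + A ≤ r := (isAffineMinorant_iff hf).1 hq x r hr
  simp only [add_apply, smul_apply, smul_eq_mul]
  nlinarith

theorem IsAffineMinorant.apply_add_nonpos {f : X → EReal} (hf : ∀ x, f x ≠ ⊥)
    (hmin : ∃ q A, IsAffineMinorant f q A) {z : StrongDual ℝ (StrongDual ℝ X)}
    (hz : fbiconj f z ≤ 0) {a : ℝ} (ha : 0 ≤ a) {p : StrongDual ℝ X} {β : ℝ}
    (h : IsAffineMinorant (fun x => smulInf a (f x)) p β) : z p + β ≤ 0 := by
  rcases ha.eq_or_lt with rfl | ha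
  · obtain ⟨q, A, hq⟩ := hmin
    refine nonpos_of_forall_add_mul_le (a := z q + A) (K := 0) fun t ht => ?_
    have := ((hq.add_smul_of_smulInf_zero hf h ht.le).le_fbiconj z).trans hz
    rw [← EReal.coe_zero, EReal.coe_le_coe_iff, map_add, map_smul, smul_eq_mul] at this
    linarith
  · have := ((h.of_smulInf hf ha).le_fbiconj z).trans hz
    rw [← EReal.coe_zero, EReal.coe_le_coe_iff, map_smul, smul_eq_mul, ← mul_add] at this
    exact nonpos_of_mul_nonpos_right this (inv_pos.2 ha)

theorem ContinuousLinearMap.apply_prod_eq_sum {ι : Type*} [Fintype ι] [DecidableEq ι]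
    (φ : StrongDual ℝ ((ι → ℝ) × ℝ)) (u : ι → ℝ) (t : ℝ) :
    φ (u, t) = ∑ k, φ (Pi.single k 1, 0) * u k + φ (0, 1) * t := by
  have : ((u, t) : (ι → ℝ) × ℝ) = ∑ k, u k • ((Pi.single k 1 : ι → ℝ), (0 : ℝ)) + t • (0, 1) := by
    ext <;> simp [Prod.fst_sum, Prod.snd_sum, Finset.sum_apply, Pi.single_apply]
  rw [this, map_add, map_sum]
  simp only [map_smul, smul_eq_mul, mul_comm]

theorem exists_separating_multipliers {ι : Type*} [Fintype ι] {f₀ : X → EReal}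
    {f : ι → X → EReal} (hf₀ : ConvexER f₀) (hf : ∀ k, ConvexER (f k)) {c : ℝ}
    (hc : ∀ x, (∀ k, f k x ≤ 0) → (c : EReal) ≤ f₀ x) :
    ∃ (μ : ι → ℝ) (μ₀ : ℝ), ∀ x (u : ι → ℝ) (t : ℝ), (∀ k, f k x < u k) → f₀ x < t →
      μ₀ * c < ∑ k, μ k * u k + μ₀ * t := by
  set D : Set ((ι → ℝ) × ℝ) := ⋃ x, {w | (∀ k, f k x < w.1 k) ∧ f₀ x < w.2}
  have hDo : IsOpen D := isOpen_iUnion fun x => by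
    simp only [ofPred_and, ofPred_forall]
    exact (isOpen_iInter_of_finite fun k => isOpen_lt continuous_const
      (continuous_coe_real_ereal.comp (by fun_prop))).inter
      (isOpen_lt continuous_const (continuous_coe_real_ereal.comp (by fun_prop)))
  have hDc : Convex ℝ D := by
    intro w hw w' hw' a b ha hb hab
    simp only [D, mem_iUnion, mem_ofPred_eq] at hw hw' ⊢
    obtain ⟨x, hx, hx₀⟩ := hw
    obtain ⟨x', hx', hx₀'⟩ := hw'
    exact ⟨a • x + b • x', fun k => by simpa using (hf k).apply_combo_lt (hx k) (hx' k) ha hb hab,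
      by simpa using hf₀.apply_combo_lt hx₀ hx₀' ha hb hab⟩
  have hcD : ((0 : ι → ℝ), c) ∉ D := by
    simp only [D, mem_iUnion, mem_ofPred_eq, not_exists, not_and, not_lt]
    exact fun x hx => hc x fun k => by simpa using (hx k).le
  obtain ⟨φ, hφ⟩ := geometric_hahn_banach_open_point hDc hDo hcD
  refine ⟨fun k => -φ (Pi.single k 1, 0), -φ (0, 1), fun x u t hu ht => ?_⟩
  have := hφ (u, t) (mem_iUnion.2 ⟨x, hu, ht⟩)
  rw [φ.apply_prod_eq_sum u t, φ.apply_prod_eq_sum 0 c] at this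
  simp only [Pi.zero_apply, mul_zero, Finset.sum_const_zero, zero_add] at this
  simp only [neg_mul, Finset.sum_neg_distrib]
  linarith

theorem exists_lagrange_multipliers {ι : Type*} [Fintype ι] {f₀ : X → EReal}
    {f : ι → X → EReal} (hf₀ : ConvexER f₀) (hf : ∀ k, ConvexER (f k)) (hf₀b : ∀ x, f₀ x ≠ ⊥)
    (hfb : ∀ k x, f k x ≠ ⊥) {x₀ : X} (hx₀ : f₀ x₀ ≠ ⊤) (hslater : ∀ k, f k x₀ < 0) {c : ℝ}
    (hc : ∀ x, (∀ k, f k x ≤ 0) → (c : EReal) ≤ f₀ x) :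
    ∃ l : ι → ℝ, (∀ k, 0 ≤ l k) ∧ ∀ x, (c : EReal) ≤ f₀ x + ∑ k, smulInf (l k) (f k x) := by
  obtain ⟨μ, μ₀, hsep⟩ := exists_separating_multipliers hf₀ hf hc
  -- By Slater, `(0, T)` is a strict upper bound of the values at `x₀`; as `c < T`, `μ₀ > 0`.
  set T := max c (f₀ x₀).toReal + 1
  have hT₀ : f₀ x₀ < T := by
    rw [← EReal.coe_toReal hx₀ (hf₀b x₀), EReal.coe_lt_coe_iff]
    linarith [le_max_right c (f₀ x₀).toReal]
  have hμ₀ : 0 < μ₀ := by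
    have := hsep x₀ 0 T (by simpa using hslater) hT₀
    simp only [Pi.zero_apply, mul_zero, Finset.sum_const_zero, zero_add] at this
    nlinarith [le_max_left c (f₀ x₀).toReal]
  have hμ : ∀ k, 0 ≤ μ k := fun k => by
    refine neg_nonpos.1 (nonpos_of_forall_add_mul_le (a := μ₀ * c - μ₀ * T) (K := 0)
      fun s hs => ?_)
    have := hsep x₀ (Pi.single k s) T (fun j => (hslater j).trans_le
      (EReal.coe_nonneg.2 (by rw [Pi.single_apply]; split_ifs <;> linarith))) hT₀
    simp [Pi.single_apply] at this
    linarith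
  have hkey : ∀ x (v₀ : ℝ) (v : ι → ℝ), f₀ x = v₀ → (∀ k, f k x = v k) →
      μ₀ * c ≤ ∑ k, μ k * v k + μ₀ * v₀ := fun x v₀ v h₀ h => by
    refine le_of_forall_pos_lt_add_mul (C := ∑ k, μ k + μ₀) fun ε hε => ?_
    have := hsep x (fun k => v k + ε) (v₀ + ε) (fun k => by rw [h k]; exact_mod_cast by linarith)
      (by rw [h₀]; exact_mod_cast by linarith)
    simp only [mul_add, Finset.sum_add_distrib, ← Finset.sum_mul] at this
    linarith
  refine ⟨fun k => μ k / μ₀, fun k => div_nonneg (hμ k) hμ₀.le, fun x => ?_⟩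
  have hbot : ∀ k ∈ Finset.univ, smulInf (μ k / μ₀) (f k x) ≠ ⊥ :=
    fun k _ => smulInf_ne_bot _ (hfb k x)
  by_cases hfin : f₀ x ≠ ⊤ ∧ ∀ k, f k x ≠ ⊤
  · obtain ⟨v₀, h₀⟩ : ∃ r : ℝ, f₀ x = r := ⟨_, (EReal.coe_toReal hfin.1 (hf₀b x)).symm⟩
    choose v h using fun k => (⟨_, (EReal.coe_toReal (hfin.2 k) (hfb k x)).symm⟩ :
      ∃ r : ℝ, f k x = r)
    have hsum : ∑ k, μ k / μ₀ * v k = (∑ k, μ k * v k) / μ₀ := by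
      rw [Finset.sum_div]
      exact Finset.sum_congr rfl fun k _ => div_mul_eq_mul_div _ _ _
    have := hkey x v₀ v h₀ h
    simp only [h₀, h, smulInf_coe]
    rw [← EReal.coe_sum, ← EReal.coe_add, EReal.coe_le_coe_iff, hsum, add_comm,
      ← sub_le_iff_le_add, le_div_iff₀ hμ₀]
    linarith
  · simp only [not_and_or, not_forall, not_not] at hfin
    rcases hfin with h | ⟨k, hk⟩
    · rw [h, EReal.top_add_of_ne_bot (EReal.sum_ne_bot hbot)]
      exact le_top
    · rw [EReal.sum_eq_top hbot (Finset.mem_univ k) (by rw [hk, smulInf_top]),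
        EReal.add_top_of_ne_bot (hf₀b x)]
      exact le_top

theorem biconjugate_relaxation_finitely_many_constraints_general
    {X : Type*} [NormedAddCommGroup X] [NormedSpace ℝ X]
    (m : ℕ) (f₀ : X → EReal) (f : Fin m → X → EReal)
    (hf₀p : ProperER f₀) (hf₀c : ConvexER f₀)
    (hfp : ∀ k, ProperER (f k)) (hfc : ∀ k, ConvexER (f k))
    (hcont : ∃ x₁, f₀ x₁ ≠ ⊤ ∧ ∀ k, f k x₁ ≠ ⊤ ∧ ContinuousAt (f k) x₁)
    (hslater : ∃ x₀, f₀ x₀ ≠ ⊤ ∧ ∀ k, f k x₀ < 0) :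
    (⨅ x ∈ {x : X | ∀ k, f k x ≤ 0}, f₀ x) =
      ⨅ z ∈ {z : StrongDual ℝ (StrongDual ℝ X) | ∀ k, fbiconj (f k) z ≤ 0}, fbiconj f₀ z := by
  obtain ⟨x₁, hx₁, hcont⟩ := hcont
  obtain ⟨x₀, hx₀, hslater⟩ := hslater
  refine le_antisymm (le_iInf₂ fun z hz => EReal.ge_of_forall_gt_iff_ge.1 fun c hc => ?_)
    (iInf_fbiconj_le_iInf f₀ f)
  obtain ⟨l, hl, hlag⟩ := exists_lagrange_multipliers hf₀c hfc hf₀p.2 (fun k => (hfp k).2) hx₀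
    hslater fun x hx => hc.le.trans (iInf₂_le x hx)
  have hlag' : IsAffineMinorant (fun x => f₀ x + ∑ k, smulInf (l k) (f k x)) 0 c := fun x => by
    simpa using hlag x
  obtain ⟨p, β, hp, hp₀⟩ := hlag'.exists_split_sum hf₀c (fun k => (hfc k).smulInf (hl k)) hx₁
    (fun k => smulInf_ne_top (l k) (hcont k).1 ((hfp k).2 x₁))
    (fun k => (continuousAt_smulInf (l k) (hcont k).1 ((hfp k).2 x₁)).comp (hcont k).2)
  have hzp : ∀ k, z (p k) + β k ≤ 0 := fun k => (hp k).apply_add_nonpos (hfp k).2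
    ((hfc k).exists_isAffineMinorant (hfp k).2 (hcont k).1 (hcont k).2) (hz k) (hl k)
  calc (c : EReal) ≤ ((z (0 - ∑ k, p k) + (c - ∑ k, β k) : ℝ) : EReal) := by
        have := Finset.sum_nonpos fun k (_ : k ∈ Finset.univ) => hzp k
        rw [Finset.sum_add_distrib] at this
        rw [EReal.coe_le_coe_iff, map_sub, map_zero, map_sum]
        linarith
    _ ≤ fbiconj f₀ z := hp₀.le_fbiconj z

/-- For a convex program with finitely many constraints
`(P): inf f₀(x) s.t. fₖ(x) ≤ 0, k = 1,…,m`, where the `fₖ` are proper convex, each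
constraint function is finite and continuous at some point of `dom f₀`, and the Slater
condition holds, the optimal value of `(P)` coincides with that of its biconjugate
relaxation posed in the bidual. -/
theorem biconjugate_relaxation_finitely_many_constraints
    {X : Type*} [NormedAddCommGroup X] [NormedSpace ℝ X] [CompleteSpace X]
    (m : ℕ) (f₀ : X → EReal) (f : Fin m → X → EReal)
    (hf₀p : ProperER f₀) (hf₀c : ConvexER f₀)
    (hfp : ∀ k, ProperER (f k)) (hfc : ∀ k, ConvexER (f k))
    (hcont : ∃ x₁, f₀ x₁ ≠ ⊤ ∧ ∀ k, f k x₁ ≠ ⊤ ∧ ContinuousAt (f k) x₁)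
    (hslater : ∃ x₀, f₀ x₀ ≠ ⊤ ∧ ∀ k, f k x₀ < 0) :
    (⨅ x ∈ {x : X | ∀ k, f k x ≤ 0}, f₀ x) =
      ⨅ z ∈ {z : StrongDual ℝ (StrongDual ℝ X) | ∀ k, fbiconj (f k) z ≤ 0}, fbiconj f₀ z :=
  biconjugate_relaxation_finitely_many_constraints_general m f₀ f hf₀p hf₀c hfp hfc hcont hslater
end
end

section
/- Let f_0, f : X → ℝ ∪ {+∞} be convex functions such that μ := inf{ f_0(x) : f(x) ≤ 0, x ∈ X } is a real number and there exists x_0 ∈ dom f_0 with f(x_0) < 0. Then a real number α satisfies inf_{x ∈ X} max{ f_0(x) − α, f(x) } = 0 if and only if α = μ. -/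
/-!
Let `φ(α) = inf_x max{f₀ x - α, f x}`. Without convexity, `0 ≤ φ(α)` when `α ≤ μ` (a feasible
point has `f₀ x ≥ μ`, an infeasible one has `f x > 0`) and `φ(α) ≤ 0` when `μ ≤ α` (nearly optimal
feasible points). The converses come from moving a point towards the Slater point `x₀`, where
`f x₀ ≤ -δ < 0`: a feasible `x` with `f₀ x < α` becomes strictly feasible, still with `f₀ < α`,
after a small step, so `φ(α) < 0` when `μ < α`; and an `x` with `f₀ x ≤ α + ε`, `f x ≤ ε` becomes
feasible after the step `ε / (ε + δ)`, at a cost in `f₀` that vanishes as `ε → 0`.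
-/

open Filter Topology Set NormedSpace
open scoped Classical

noncomputable section

variable {X : Type*} [NormedAddCommGroup X] [NormedSpace ℝ X]

namespace ConvexER

variable {g : X → EReal}

lemma apply_combo_le_s14 (hg : ConvexER g) {u v : X} {p q t : ℝ}
    (hu : g u ≤ p) (hv : g v ≤ q) (ht₀ : 0 ≤ t) (ht₁ : t ≤ 1) :
    g ((1 - t) • u + t • v) ≤ ((1 - t) * p + t * q : ℝ) := by
  have hs : (0 : EReal) ≤ ((1 - t : ℝ) : EReal) := by exact_mod_cast sub_nonneg.2 ht₁
  have ht : (0 : EReal) ≤ (t : EReal) := by exact_mod_cast ht₀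
  calc g ((1 - t) • u + t • v) ≤ ((1 - t : ℝ) : EReal) * g u + (t : EReal) * g v :=
        hg u v (1 - t) t (sub_nonneg.2 ht₁) ht₀ (by ring)
    _ ≤ ((1 - t : ℝ) : EReal) * p + (t : EReal) * q :=
        add_le_add (mul_le_mul_of_nonneg_left hu hs) (mul_le_mul_of_nonneg_left hv ht)
    _ = ((1 - t) * p + t * q : ℝ) := by push_cast; rfl

end ConvexER

lemma exists_pos_le_one_combo_lt {a c α : ℝ} (h : a < α) :
    ∃ t : ℝ, 0 < t ∧ t ≤ 1 ∧ (1 - t) * a + t * c < α := by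
  have hcont : ContinuousWithinAt (fun t : ℝ => (1 - t) * a + t * c) (Ioi 0) 0 :=
    (by fun_prop : Continuous fun t : ℝ => (1 - t) * a + t * c).continuousWithinAt
  have hlt : ∀ᶠ t in 𝓝[>] (0 : ℝ), (1 - t) * a + t * c < α :=
    hcont.eventually_lt continuousWithinAt_const (by simpa using h)
  have hle : ∀ᶠ t in 𝓝[>] (0 : ℝ), t ≤ 1 :=
    nhdsWithin_le_nhds (eventually_le_nhds zero_lt_one)
  exact (eventually_mem_nhdsWithin.and (hle.and hlt)).exists

lemma exists_pos_combo_lt {α c δ z : ℝ} (hδ : 0 < δ) (hz : α < z) :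
    ∃ ε : ℝ, 0 < ε ∧ (1 - ε / (ε + δ)) * (α + ε) + ε / (ε + δ) * c < z := by
  set B : ℝ → ℝ := fun ε => (1 - ε / (ε + δ)) * (α + ε) + ε / (ε + δ) * c
  have hB : Tendsto B (𝓝[>] 0) (𝓝 α) := by
    have hcont : ContinuousAt B 0 := by
      have hne : (0 : ℝ) + δ ≠ 0 := by simpa using hδ.ne'
      fun_prop (disch := exact hne)
    simpa [B] using hcont.continuousWithinAt.tendsto (s := Ioi 0)
  exact (eventually_mem_nhdsWithin.and (hB.eventually (gt_mem_nhds hz))).exists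

section Problem

variable {E : Type*} (f₀ f : E → EReal)

def constrainedInf : EReal := ⨅ x ∈ {x : E | f x ≤ 0}, f₀ x

def infMaxSub (α : ℝ) : EReal := ⨅ x : E, max (f₀ x - (α : EReal)) (f x)

variable {f₀ f}

lemma exists_slater_bounds (hslater : ∃ x₀, f₀ x₀ ≠ ⊤ ∧ f x₀ < 0) :
    ∃ x₀ : E, ∃ c δ : ℝ, 0 < δ ∧ f₀ x₀ ≤ c ∧ f x₀ ≤ ((-δ : ℝ) : EReal) := by
  obtain ⟨x₀, hx₀, hfx₀⟩ := hslater
  obtain ⟨c, hc, -⟩ := EReal.lt_iff_exists_real_btwn.1 hx₀.lt_top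
  obtain ⟨r, hr, hr₀⟩ := EReal.lt_iff_exists_real_btwn.1 hfx₀
  exact ⟨x₀, c, -r, by simpa using hr₀, hc.le, by simpa using hr.le⟩

lemma constrainedInf_le {x : E} (hx : f x ≤ 0) : constrainedInf f₀ f ≤ f₀ x :=
  iInf₂_le x hx

lemma constrainedInf_lt_of_infMaxSub_neg {α : ℝ} (h : infMaxSub f₀ f α < 0) :
    constrainedInf f₀ f < α := by
  obtain ⟨x, hx⟩ := iInf_lt_iff.1 h
  refine (constrainedInf_le ((le_max_right _ _).trans_lt hx).le).trans_lt ?_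
  exact (EReal.sub_neg (.inr (EReal.coe_ne_top α)) (.inr (EReal.coe_ne_bot α))).1
    ((le_max_left _ _).trans_lt hx)

lemma infMaxSub_nonpos_of_constrainedInf_le {α : ℝ} (h : constrainedInf f₀ f ≤ α) :
    infMaxSub f₀ f α ≤ 0 := by
  refine EReal.le_of_forall_lt_iff_le.1 fun ε hε => ?_
  have hε' : 0 < ε := by exact_mod_cast hε
  obtain ⟨x, hx, hf₀x⟩ := lt_biInf_iff.1
    (h.trans_lt (by exact_mod_cast (by linarith : α < ε + α)) : constrainedInf f₀ f < (ε + α : ℝ))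
  refine (iInf_le _ x).trans (max_le ?_ (hx.trans hε.le))
  exact EReal.sub_le_of_le_add (by exact_mod_cast hf₀x.le)

end Problem

section Convex

variable {f₀ f : X → EReal} {α : ℝ}

lemma infMaxSub_neg_of_constrainedInf_lt (hf₀c : ConvexER f₀) (hfc : ConvexER f)
    (hslater : ∃ x₀, f₀ x₀ ≠ ⊤ ∧ f x₀ < 0) (h : constrainedInf f₀ f < α) :
    infMaxSub f₀ f α < 0 := by
  obtain ⟨x₀, c, δ, hδ, hf₀x₀, hfx₀⟩ := exists_slater_bounds hslater
  obtain ⟨x, hx, hf₀x⟩ := lt_biInf_iff.1 h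
  obtain ⟨a, hf₀a, haα⟩ := EReal.lt_iff_exists_real_btwn.1 hf₀x
  obtain ⟨t, ht₀, ht₁, hcombo⟩ := exists_pos_le_one_combo_lt (c := c) (EReal.coe_lt_coe_iff.1 haα)
  have hfy : f ((1 - t) • x + t • x₀) < 0 := by
    refine (hfc.apply_combo_le_s14 (p := 0) (by exact_mod_cast hx) hfx₀ ht₀.le ht₁).trans_lt ?_
    exact_mod_cast (by nlinarith : (1 - t) * 0 + t * -δ < 0)
  have hf₀y : f₀ ((1 - t) • x + t • x₀) < α :=
    (hf₀c.apply_combo_le_s14 hf₀a.le hf₀x₀ ht₀.le ht₁).trans_lt (by exact_mod_cast hcombo)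
  refine (iInf_le _ _).trans_lt (max_lt ?_ hfy)
  exact EReal.sub_lt_of_lt_add (by rwa [zero_add])

lemma constrainedInf_le_of_infMaxSub_nonpos (hf₀c : ConvexER f₀) (hfc : ConvexER f)
    (hslater : ∃ x₀, f₀ x₀ ≠ ⊤ ∧ f x₀ < 0) (h : infMaxSub f₀ f α ≤ 0) :
    constrainedInf f₀ f ≤ α := by
  obtain ⟨x₀, c, δ, hδ, hf₀x₀, hfx₀⟩ := exists_slater_bounds hslater
  refine EReal.le_of_forall_lt_iff_le.1 fun z hz => ?_
  obtain ⟨ε, hε, hεz⟩ := exists_pos_combo_lt (c := c) hδ (EReal.coe_lt_coe_iff.1 hz)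
  have hεδ : 0 < ε + δ := by linarith
  set t := ε / (ε + δ)
  have ht₀ : 0 ≤ t := by positivity
  have ht₁ : t ≤ 1 := (div_le_one hεδ).2 (by linarith)
  obtain ⟨x, hx⟩ := iInf_lt_iff.1 (h.trans_lt (by exact_mod_cast hε : (0 : EReal) < ε))
  have hf₀x : f₀ x ≤ ((α + ε : ℝ) : EReal) := by
    have := (EReal.sub_lt_iff (.inl (EReal.coe_ne_bot α)) (.inl (EReal.coe_ne_top α))).1
      ((le_max_left _ _).trans_lt hx)
    rw [← EReal.coe_add, add_comm] at this
    exact this.le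
  have hfy : f ((1 - t) • x + t • x₀) ≤ 0 := by
    refine (hfc.apply_combo_le_s14 ((le_max_right _ _).trans hx.le) hfx₀ ht₀ ht₁).trans_eq ?_
    have : (1 - t) * ε + t * -δ = 0 := by simp only [t]; field_simp; ring
    rw [this, EReal.coe_zero]
  calc constrainedInf f₀ f ≤ f₀ ((1 - t) • x + t • x₀) := constrainedInf_le hfy
    _ ≤ ((1 - t) * (α + ε) + t * c : ℝ) := hf₀c.apply_combo_le_s14 hf₀x hf₀x₀ ht₀ ht₁
    _ ≤ z := by exact_mod_cast hεz.le

end Convex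

theorem inf_max_eq_zero_iff_eq_value_general
    {X : Type*} [NormedAddCommGroup X] [NormedSpace ℝ X]
    (f₀ f : X → EReal) (hf₀c : ConvexER f₀) (hfc : ConvexER f)
    (μ : ℝ) (hμ : (⨅ x ∈ {x : X | f x ≤ 0}, f₀ x) = (μ : EReal))
    (hslater : ∃ x₀, f₀ x₀ ≠ ⊤ ∧ f x₀ < 0) (α : ℝ) :
    (⨅ x : X, max (f₀ x - (α : EReal)) (f x)) = 0 ↔ α = μ := by
  change constrainedInf f₀ f = μ at hμ
  change infMaxSub f₀ f α = 0 ↔ α = μ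
  have hnonpos : infMaxSub f₀ f α ≤ 0 ↔ μ ≤ α := by
    rw [← EReal.coe_le_coe_iff, ← hμ]
    exact ⟨constrainedInf_le_of_infMaxSub_nonpos hf₀c hfc hslater,
      infMaxSub_nonpos_of_constrainedInf_le⟩
  have hnonneg : 0 ≤ infMaxSub f₀ f α ↔ α ≤ μ := by
    rw [← not_lt, ← not_lt, ← EReal.coe_lt_coe_iff, ← hμ]
    exact not_congr ⟨constrainedInf_lt_of_infMaxSub_neg,
      infMaxSub_neg_of_constrainedInf_lt hf₀c hfc hslater⟩
  rw [le_antisymm_iff, hnonpos, hnonneg, and_comm, ← le_antisymm_iff]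

/-- (Characterization of the optimal value.) Let `f₀, f : X → ℝ ∪ {+∞}`
be convex, `μ := inf{f₀(x) : f(x) ≤ 0}` a real number, and assume `f(x₀) < 0` for some
`x₀ ∈ dom f₀`. Then a real number `α` satisfies `inf_x max{f₀(x) − α, f(x)} = 0` if and
only if `α = μ`. -/
theorem inf_max_eq_zero_iff_eq_value
    {X : Type*} [NormedAddCommGroup X] [NormedSpace ℝ X] [CompleteSpace X]
    (f₀ f : X → EReal) (hf₀c : ConvexER f₀) (hfc : ConvexER f)
    (hf₀b : ∀ x, f₀ x ≠ ⊥) (hfb : ∀ x, f x ≠ ⊥)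
    (μ : ℝ) (hμ : (⨅ x ∈ {x : X | f x ≤ 0}, f₀ x) = (μ : EReal))
    (hslater : ∃ x₀, f₀ x₀ ≠ ⊤ ∧ f x₀ < 0) (α : ℝ) :
    (⨅ x : X, max (f₀ x - (α : EReal)) (f x)) = 0 ↔ α = μ :=
  inf_max_eq_zero_iff_eq_value_general f₀ f hf₀c hfc μ hμ hslater α
end
end

section
/- Let X = c_0, the Banach space of real sequences converging to 0 with the supremum norm, whose bidual is X** = ℓ_∞, let c_00 ⊂ c_0 be the subspace of sequences with only finitely many nonzero terms, and let L ⊂ c_0 be a finite-dimensional subspace with L ≠ {0} and L ∩ c_00 = {0}. Set f := I_{c_00} and g := I_L. Then f** = I_{ℓ_∞} and g** = I_L on X**, so that f + g = (f+g)** = I_{{0}} while f** + g** = I_L; in particular the biconjugate sum rule fails: (f + g)** ≠ f** + g**. -/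
open Filter Topology Set NormedSpace
open scoped Classical

noncomputable section

variable {X : Type*} [NormedAddCommGroup X] [NormedSpace ℝ X]

/-! The conjugate of the indicator of a subspace `A ⊆ X` is the indicator of its annihilator
`A^⊥ ⊆ X*`, so `I_A** = I_{A^⊥⊥}` on `X**`. Since `c₀₀` is dense in `c₀`, `c₀₀^⊥ = 0` and
`I_{c₀₀}** ≡ 0`. For finite-dimensional `L`, a functional on `X*` that kills `L^⊥` vanishes on the
common kernel of the evaluations at a basis of `L`, hence is a combination of them: `L^⊥⊥ = L`.
Finally `L ∩ c₀₀ = 0` makes `f + g = I_{0}` its own biconjugate, which is `+∞` at a nonzero point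
of `L` where `f** + g**` vanishes. -/

open ZeroAtInfty StrongDual

lemma eindicator_add_eindicator {Z : Type*} (A B : Set Z) (z : Z) :
    eindicator A z + eindicator B z = eindicator (A ∩ B) z := by
  by_cases hA : z ∈ A <;> by_cases hB : z ∈ B <;> simp [eindicator, hA, hB]

lemma iSup_sub_eindicator_submodule {Y : Type*} [AddCommGroup Y] [Module ℝ Y]
    (A : Submodule ℝ Y) (φ : Module.Dual ℝ Y) :
    ⨆ y, (φ y : EReal) - eindicator A y = eindicator A.dualAnnihilator φ := by
  by_cases hφ : φ ∈ A.dualAnnihilator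
  · simp only [eindicator, SetLike.mem_coe, hφ, if_true]
    refine le_antisymm (iSup_le fun y => ?_) ?_
    · by_cases hy : y ∈ A
      · simp [hy, (Submodule.mem_dualAnnihilator φ).1 hφ y hy]
      · simp [hy]
    · exact le_iSup_of_le 0 (by simp [A.zero_mem])
  · simp only [eindicator, SetLike.mem_coe, hφ, if_false]
    rw [iSup_eq_top]
    obtain ⟨y, hyA, hy⟩ : ∃ y ∈ A, φ y ≠ 0 := by
      simpa [Submodule.mem_dualAnnihilator] using hφ
    intro b hb
    obtain ⟨r, hbr, -⟩ := EReal.exists_between_coe_real hb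
    refine ⟨(r / φ y) • y, ?_⟩
    simpa [eindicator, A.smul_mem _ hyA, div_mul_cancel₀ _ hy] using hbr

lemma fconj_eindicator_submodule (A : Submodule ℝ X) :
    fconj (eindicator (A : Set X)) = eindicator (polarSubmodule ℝ A : Set (StrongDual ℝ X)) := by
  funext p
  refine (iSup_sub_eindicator_submodule A (p : X →ₗ[ℝ] ℝ)).trans ?_
  simp [eindicator, Submodule.mem_dualAnnihilator, mem_polarSubmodule]

lemma fbiconj_eindicator_submodule (A : Submodule ℝ X) :
    fbiconj (eindicator (A : Set X)) =
      eindicator (polarSubmodule ℝ (polarSubmodule ℝ A) : Set (StrongDual ℝ (StrongDual ℝ X))) := by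
  funext z
  rw [fbiconj, fconj_eindicator_submodule]
  refine (iSup_sub_eindicator_submodule (polarSubmodule ℝ A) (z : StrongDual ℝ X →ₗ[ℝ] ℝ)).trans ?_
  simp [eindicator, Submodule.mem_dualAnnihilator, mem_polarSubmodule]

lemma polarSubmodule_eq_bot_of_dense {A : Submodule ℝ X} (hA : Dense (A : Set X)) :
    polarSubmodule ℝ A = ⊥ := by
  refine (Submodule.eq_bot_iff _).2 fun p hp => ?_
  exact ContinuousLinearMap.ext <|
    congrFun (p.continuous.ext_on hA continuous_const ((mem_polarSubmodule ℝ A p).1 hp))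

lemma polarSubmodule_bot : polarSubmodule ℝ (⊥ : Submodule ℝ X) = ⊤ :=
  Submodule.eq_top_iff'.2 fun p => by simp [mem_polarSubmodule]

lemma polarSubmodule_polarSubmodule_of_finiteDimensional (L : Submodule ℝ X)
    [FiniteDimensional ℝ L] :
    polarSubmodule ℝ (polarSubmodule ℝ L) =
      L.map (inclusionInDoubleDual ℝ X : X →ₗ[ℝ] StrongDual ℝ (StrongDual ℝ X)) := by
  refine le_antisymm (fun z hz => ?_) (Submodule.map_le_iff_le_comap.2 fun x hx => ?_)
  · let b := Module.finBasis ℝ L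
    let evalAt (i : Fin (Module.finrank ℝ L)) : StrongDual ℝ X →ₗ[ℝ] ℝ :=
      (inclusionInDoubleDual ℝ X (b i) : StrongDual ℝ X →ₗ[ℝ] ℝ)
    have hker : ⨅ i, LinearMap.ker (evalAt i) ≤ LinearMap.ker (z : StrongDual ℝ X →ₗ[ℝ] ℝ) := by
      intro p hp
      have hpL : (p : X →ₗ[ℝ] ℝ).comp L.subtype = 0 :=
        b.ext fun i => by simpa [evalAt] using (Submodule.mem_iInf _).1 hp i
      refine (mem_polarSubmodule ℝ _ z).1 hz p ((mem_polarSubmodule ℝ L p).2 fun x hx => ?_)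
      simpa using LinearMap.congr_fun hpL ⟨x, hx⟩
    obtain ⟨c, hc⟩ :=
      (Submodule.mem_span_range_iff_exists_fun ℝ).1 (mem_span_of_iInf_ker_le_ker hker)
    refine ⟨∑ i, c i • (b i : X), Submodule.sum_mem _ fun i _ => L.smul_mem _ (b i).2, ?_⟩
    ext p
    simpa [evalAt] using LinearMap.congr_fun hc p
  · exact (mem_polarSubmodule ℝ _ _).2 fun p hp => by
      simpa using (mem_polarSubmodule ℝ L p).1 hp x hx

def c00 : Submodule ℝ C₀(ℕ, ℝ) where
  carrier := {x | (Function.support fun n => x n).Finite}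
  add_mem' hx hy := (hx.union hy).subset (Function.support_add _ _)
  zero_mem' := by simp
  smul_mem' c _ hx := hx.subset (Function.support_const_smul_subset c _)

def truncate (x : C₀(ℕ, ℝ)) (N : ℕ) : C₀(ℕ, ℝ) where
  toFun n := if n ≤ N then x n else 0
  continuous_toFun := continuous_of_discreteTopology
  zero_at_infty' := by
    rw [cocompact_eq_atTop]
    exact tendsto_const_nhds.congr'
      ((eventually_gt_atTop N).mono fun n hn => (if_neg (by omega)).symm)

lemma truncate_mem_c00 (x : C₀(ℕ, ℝ)) (N : ℕ) : truncate x N ∈ c00 :=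
  (Set.finite_Iic N).subset fun n hn => by
    by_contra h
    exact hn (if_neg h)

lemma tendsto_truncate (x : C₀(ℕ, ℝ)) : Tendsto (truncate x) atTop (𝓝 x) := by
  refine Metric.tendsto_atTop.2 fun ε hε => ?_
  have hx : Tendsto x atTop (𝓝 0) := cocompact_eq_atTop (α := ℕ) ▸ zero_at_infty x
  obtain ⟨N, hN⟩ := Metric.tendsto_atTop.1 hx (ε / 2) (half_pos hε)
  refine ⟨N, fun M hM => ?_⟩
  rw [← ZeroAtInftyContinuousMap.dist_toBCF_eq_dist]
  refine lt_of_le_of_lt ((BoundedContinuousFunction.dist_le (half_pos hε).le).2 fun n => ?_)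
    (half_lt_self hε)
  by_cases hn : n ≤ M
  · simpa [truncate, hn] using (half_pos hε).le
  · simpa [truncate, hn] using (hN n (by omega)).le

lemma dense_c00 : Dense (c00 : Set C₀(ℕ, ℝ)) := fun x =>
  mem_closure_of_tendsto (tendsto_truncate x) (Eventually.of_forall (truncate_mem_c00 x))

/-- (Failure of the biconjugate sum rule in `c₀`.) Let `X = c₀`,
`c₀₀ ⊂ c₀` the subspace of finitely supported sequences, and `L ⊂ c₀` a nontrivial
finite-dimensional subspace with `L ∩ c₀₀ = {0}`. With `f := I_{c₀₀}` and `g := I_L`: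
`f** = I_{ℓ∞}` (the zero function on the whole bidual), `g** = I_L` (indicator of the
canonical image of `L` in the bidual), `f + g = I_{{0}}`, `(f+g)** = I_{{0}}`, and in
particular `(f + g)** ≠ f** + g**`. -/
theorem biconj_sum_rule_fails_in_c0
    (L : Submodule ℝ (ZeroAtInftyContinuousMap ℕ ℝ)) [FiniteDimensional ℝ L]
    (hL : L ≠ ⊥)
    (hLc : (L : Set (ZeroAtInftyContinuousMap ℕ ℝ)) ∩
      {x | (Function.support fun n => x n).Finite} = {0}) :
    fbiconj (eindicator {x : ZeroAtInftyContinuousMap ℕ ℝ |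
        (Function.support fun n => x n).Finite}) =
      eindicator (Set.univ : Set (StrongDual ℝ (StrongDual ℝ (ZeroAtInftyContinuousMap ℕ ℝ)))) ∧
    fbiconj (eindicator (L : Set (ZeroAtInftyContinuousMap ℕ ℝ))) =
      eindicator ((inclusionInDoubleDual ℝ (ZeroAtInftyContinuousMap ℕ ℝ)) ''
        (L : Set (ZeroAtInftyContinuousMap ℕ ℝ))) ∧
    (fun x => eindicator {x : ZeroAtInftyContinuousMap ℕ ℝ |
        (Function.support fun n => x n).Finite} x +
        eindicator (L : Set (ZeroAtInftyContinuousMap ℕ ℝ)) x) =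
      eindicator ({0} : Set (ZeroAtInftyContinuousMap ℕ ℝ)) ∧
    fbiconj (fun x => eindicator {x : ZeroAtInftyContinuousMap ℕ ℝ |
        (Function.support fun n => x n).Finite} x +
        eindicator (L : Set (ZeroAtInftyContinuousMap ℕ ℝ)) x) =
      eindicator ({0} : Set (StrongDual ℝ (StrongDual ℝ (ZeroAtInftyContinuousMap ℕ ℝ)))) ∧
    fbiconj (fun x => eindicator {x : ZeroAtInftyContinuousMap ℕ ℝ |
        (Function.support fun n => x n).Finite} x +
        eindicator (L : Set (ZeroAtInftyContinuousMap ℕ ℝ)) x) ≠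
      fun z => fbiconj (eindicator {x : ZeroAtInftyContinuousMap ℕ ℝ |
        (Function.support fun n => x n).Finite}) z +
        fbiconj (eindicator (L : Set (ZeroAtInftyContinuousMap ℕ ℝ))) z := by
  rw [show {x : C₀(ℕ, ℝ) | (Function.support fun n => x n).Finite} = c00 from rfl]
  set J := inclusionInDoubleDual ℝ C₀(ℕ, ℝ)
  have hf : fbiconj (eindicator (c00 : Set C₀(ℕ, ℝ))) = eindicator univ := by
    rw [fbiconj_eindicator_submodule, polarSubmodule_eq_bot_of_dense dense_c00, polarSubmodule_bot,
      Submodule.top_coe]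
  have hg : fbiconj (eindicator (L : Set C₀(ℕ, ℝ))) = eindicator (J '' L) := by
    rw [fbiconj_eindicator_submodule, polarSubmodule_polarSubmodule_of_finiteDimensional,
      Submodule.map_coe, ContinuousLinearMap.coe_coe]
  have hsum : (fun x => eindicator (c00 : Set C₀(ℕ, ℝ)) x + eindicator (L : Set C₀(ℕ, ℝ)) x) =
      eindicator {0} :=
    funext fun x => by
      rw [eindicator_add_eindicator, inter_comm]
      exact congrArg (eindicator · x) hLc
  have hzero : fbiconj (eindicator ({0} : Set C₀(ℕ, ℝ))) = eindicator {0} := by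
    rw [← Submodule.bot_coe (R := ℝ), fbiconj_eindicator_submodule,
      polarSubmodule_polarSubmodule_of_finiteDimensional, Submodule.map_bot, Submodule.bot_coe]
  refine ⟨hf, hg, hsum, hsum ▸ hzero, fun h => ?_⟩
  obtain ⟨x, hxL, hx0⟩ := Submodule.exists_mem_ne_zero_of_ne_bot hL
  have hJx : J x ≠ 0 := fun hJx0 =>
    hx0 <| (inclusionInDoubleDualLi ℝ).injective (hJx0.trans (map_zero J).symm)
  have := congrFun h (J x)
  rw [hsum, hzero, hf, hg] at this
  simp [eindicator, hJx, mem_image_of_mem J hxL] at this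
end
end

section
/- In the Banach space c_0 of real sequences converging to 0 (supremum norm), the following infimum computation holds: inf_{x = (x_k)_k ∈ c_0} ( sup_{k≥1} |x_k − 1| + ∑_{k≥1} 2^{−k} |x_k − 1| ) = 1. Equivalently, the infinite convex program in c_0 × ℝ with objective f_0(x,y) := y + ∑_{k≥1} 2^{−k}|x_k − 1| and constraints f_k(x,y) := |x_k − 1| − y ≤ 0 for all k ≥ 1 has optimal value 1. -/
/-!
For `x ∈ c₀` we have `|x_k - 1| → 1`, so `sup_k |x_k - 1| ≥ 1` and every feasible `y` is `≥ 1`,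
while the weighted sum is nonnegative. Conversely, the sequence equal to `1` on its first `N`
terms and `0` afterwards has `sup_k |x_k - 1| = 1` and weighted sum equal to the tail
`∑_{k ≥ N} w_k`, which tends to `0`; so the infimum is `1` for any nonnegative summable
weights.
-/

open Filter Topology
open scoped ZeroAtInfty

namespace ZeroAtInftyContinuousMap

variable {β : Type*} [TopologicalSpace β] [Zero β]

theorem tendsto_atTop_nhds_zero (x : C₀(ℕ, β)) : Tendsto x atTop (𝓝 0) :=
  cocompact_eq_atTop (α := ℕ) ▸ x.zero_at_infty'

def ofTendstoAtTop (f : ℕ → β) (hf : Tendsto f atTop (𝓝 0)) : C₀(ℕ, β) where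
  toFun := f
  continuous_toFun := continuous_of_discreteTopology
  zero_at_infty' := cocompact_eq_atTop (α := ℕ) ▸ hf

@[simp]
theorem ofTendstoAtTop_apply (f : ℕ → β) (hf : Tendsto f atTop (𝓝 0)) (k : ℕ) :
    ofTendstoAtTop f hf k = f k :=
  rfl

end ZeroAtInftyContinuousMap

open ZeroAtInftyContinuousMap

theorem abs_le_of_forall_abs_sub_le (x : C₀(ℕ, ℝ)) {c y : ℝ} (h : ∀ k, |x k - c| ≤ y) :
    |c| ≤ y := by
  have hlim : Tendsto (fun k => |x k - c|) atTop (𝓝 |0 - c|) :=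
    ((tendsto_atTop_nhds_zero x).sub_const c).abs
  rw [zero_sub, abs_neg] at hlim
  exact le_of_tendsto' hlim h

theorem abs_le_ciSup_abs_sub (x : C₀(ℕ, ℝ)) (c : ℝ) : |c| ≤ ⨆ k, |x k - c| := by
  have hbdd : BddAbove (Set.range fun k => |x k - c|) :=
    (((tendsto_atTop_nhds_zero x).sub_const c).abs).bddAbove_range
  exact abs_le_of_forall_abs_sub_le x fun k => le_ciSup hbdd k

noncomputable def truncOne (N : ℕ) : C₀(ℕ, ℝ) :=
  ofTendstoAtTop (fun k => if k < N then 1 else 0) <|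
    tendsto_const_nhds.congr' <| by
      filter_upwards [eventually_ge_atTop N] with k hk
      simp [hk.not_gt]

theorem abs_truncOne_sub_one (N k : ℕ) : |truncOne N k - 1| = if k < N then 0 else 1 := by
  simp only [truncOne, ofTendstoAtTop_apply]
  split_ifs <;> norm_num

theorem ciSup_abs_truncOne_sub_one (N : ℕ) : ⨆ k, |truncOne N k - 1| = 1 := by
  refine le_antisymm (ciSup_le fun k => ?_) (by simpa using abs_le_ciSup_abs_sub (truncOne N) 1)
  rw [abs_truncOne_sub_one]
  split_ifs <;> norm_num

theorem tsum_mul_abs_truncOne_sub_one {w : ℕ → ℝ} (hw : Summable w) (N : ℕ) :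
    ∑' k, w k * |truncOne N k - 1| = ∑' k, w (k + N) := by
  simp only [abs_truncOne_sub_one, mul_ite, mul_zero, mul_one]
  have hsum : Summable fun k => if k < N then 0 else w k :=
    (summable_nat_add_iff N).mp <| by simpa using (summable_nat_add_iff N).mpr hw
  rw [← hsum.sum_add_tsum_nat_add N,
    Finset.sum_eq_zero fun k hk => if_pos (Finset.mem_range.mp hk), zero_add]
  simp

theorem ciInf_eq_of_forall_le_of_tendsto {ι : Type*} {f : ι → ℝ} {a : ℝ} (hle : ∀ i, a ≤ f i)
    {u : ℕ → ι} (hu : Tendsto (f ∘ u) atTop (𝓝 a)) : ⨅ i, f i = a :=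
  have : Nonempty ι := ⟨u 0⟩
  le_antisymm (ge_of_tendsto' hu fun n => ciInf_le ⟨a, Set.forall_mem_range.mpr hle⟩ (u n))
    (le_ciInf hle)

theorem iInf_ciSup_abs_sub_one_add_tsum_eq_one {w : ℕ → ℝ} (hw₀ : ∀ k, 0 ≤ w k)
    (hw : Summable w) :
    ⨅ x : C₀(ℕ, ℝ), ((⨆ k, |x k - 1|) + ∑' k, w k * |x k - 1|) = 1 := by
  refine ciInf_eq_of_forall_le_of_tendsto (u := truncOne) (fun x => ?_) ?_
  · have hsup : 1 ≤ ⨆ k, |x k - 1| := by simpa using abs_le_ciSup_abs_sub x 1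
    exact le_add_of_le_of_nonneg hsup (tsum_nonneg fun k => mul_nonneg (hw₀ k) (abs_nonneg _))
  · simpa [Function.comp_def, ciSup_abs_truncOne_sub_one, tsum_mul_abs_truncOne_sub_one hw]
      using (tendsto_sum_nat_add w).const_add 1

theorem iInf_add_tsum_of_forall_abs_sub_one_le_eq_one {w : ℕ → ℝ} (hw₀ : ∀ k, 0 ≤ w k)
    (hw : Summable w) :
    ⨅ p : {q : C₀(ℕ, ℝ) × ℝ // ∀ k, |q.1 k - 1| - q.2 ≤ 0},
      ((p : C₀(ℕ, ℝ) × ℝ).2 + ∑' k, w k * |(p : C₀(ℕ, ℝ) × ℝ).1 k - 1|) = 1 := by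
  have hfeas (N : ℕ) : ∀ k, |truncOne N k - 1| - 1 ≤ 0 := fun k => by
    rw [abs_truncOne_sub_one]
    split_ifs <;> norm_num
  refine ciInf_eq_of_forall_le_of_tendsto (u := fun N => ⟨(truncOne N, 1), hfeas N⟩) ?_ ?_
  · rintro ⟨⟨x, y⟩, hxy⟩
    have hy : 1 ≤ y := by simpa using abs_le_of_forall_abs_sub_le x fun k => sub_nonpos.mp (hxy k)
    exact le_add_of_le_of_nonneg hy (tsum_nonneg fun k => mul_nonneg (hw₀ k) (abs_nonneg _))
  · simpa [Function.comp_def, tsum_mul_abs_truncOne_sub_one hw]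
      using (tendsto_sum_nat_add w).const_add 1

/-- In the space `c₀` of real sequences converging to `0` (sup norm),
`inf_{x ∈ c₀} ( sup_k |x_k − 1| + ∑_k 2^{−k}|x_k − 1| ) = 1`; equivalently, the infinite
convex program in `c₀ × ℝ` minimizing `y + ∑_k 2^{−k}|x_k − 1|` under the constraints
`|x_k − 1| − y ≤ 0` for all `k` has optimal value `1`. -/
theorem c0_program_value_eq_one :
    (⨅ x : ZeroAtInftyContinuousMap ℕ ℝ,
        ((⨆ k : ℕ, |x k - 1|) + ∑' k : ℕ, (2 : ℝ)⁻¹ ^ (k + 1) * |x k - 1|)) = 1 ∧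
      (⨅ p : {q : ZeroAtInftyContinuousMap ℕ ℝ × ℝ // ∀ k : ℕ, |q.1 k - 1| - q.2 ≤ 0},
        ((p : ZeroAtInftyContinuousMap ℕ ℝ × ℝ).2 +
          ∑' k : ℕ, (2 : ℝ)⁻¹ ^ (k + 1) * |(p : ZeroAtInftyContinuousMap ℕ ℝ × ℝ).1 k - 1|)) = 1 := by
  have hw₀ (k : ℕ) : (0 : ℝ) ≤ 2⁻¹ ^ (k + 1) := by positivity
  have hw : Summable fun k : ℕ => (2 : ℝ)⁻¹ ^ (k + 1) :=
    (summable_nat_add_iff 1).mpr (summable_geometric_of_lt_one (by norm_num) (by norm_num))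
  exact ⟨iInf_ciSup_abs_sub_one_add_tsum_eq_one hw₀ hw,
    iInf_add_tsum_of_forall_abs_sub_one_le_eq_one hw₀ hw⟩
end

section
/- In ℓ_∞, the space of bounded real sequences with the supremum norm, one has inf_{z = (z_k)_k ∈ ℓ_∞} ( sup_{k≥1} |z_k − 1| + ∑_{k≥1} 2^{−k} |z_k − 1| ) = 0, whereas inf_{z ∈ ℓ_∞} ( max{ sup_{k≥1} |z_k − 1|, 1 } + ∑_{k≥1} 2^{−k} |z_k − 1| ) = 1. In particular the first infimum (the value of the biconjugate relaxation (P**) of the c_0-program with data f_0(x,y) = y + ∑_{k≥1} 2^{−k}|x_k − 1| and f_k(x,y) = |x_k − 1| − y) is strictly smaller than 1, the optimal value of that program over c_0, while the second infimum (the value of the reinforced relaxation (P_∞**)) equals it. -/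
/-!
Over `ℓ∞` the constant sequence `1` makes the sup and series terms vanish, so it attains both
infima. Over `c₀`, however, `x k → 0` forces `sup_k |x k - 1| ≥ 1`, so the `c₀` value is at
least `1`.
-/

open Filter Topology

theorem ZeroAtInftyContinuousMap.abs_le_iSup_abs_sub {α : Type*} [TopologicalSpace α] [NoncompactSpace α]
    (x : ZeroAtInftyContinuousMap α ℝ) (c : ℝ) : |c| ≤ ⨆ a, |x a - c| := by
  have hbdd : BddAbove (Set.range fun a => |x a - c|) :=
    ⟨‖x.toBCF‖ + |c|, by
      rintro _ ⟨a, rfl⟩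
      exact (abs_sub _ _).trans (add_le_add_left (x.toBCF.norm_coe_le_norm a) _)⟩
  have htendsto : Tendsto (fun a => |x a - c|) (cocompact α) (𝓝 |0 - c|) :=
    ((ZeroAtInftyContinuousMapClass.zero_at_infty x).sub_const c).abs
  rw [zero_sub, abs_neg] at htendsto
  exact le_of_tendsto' htendsto fun a => le_ciSup hbdd a

/-- In `ℓ∞` (bounded real sequences, sup norm):
`inf_{z ∈ ℓ∞} ( sup_k |z_k − 1| + ∑_k 2^{−k}|z_k − 1| ) = 0`, whereas
`inf_{z ∈ ℓ∞} ( max{sup_k |z_k − 1|, 1} + ∑_k 2^{−k}|z_k − 1| ) = 1`.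
In particular the value of the biconjugate relaxation `(P**)` of the `c₀`-program is
strictly smaller than the optimal value `1` of that program over `c₀`, while the value
of the reinforced relaxation `(P_∞**)` equals it. -/
theorem linfty_relaxation_values :
    (⨅ z : lp (fun _ : ℕ => ℝ) ⊤,
        ((⨆ k : ℕ, |z k - 1|) + ∑' k : ℕ, (2 : ℝ)⁻¹ ^ (k + 1) * |z k - 1|)) = 0 ∧
      (⨅ z : lp (fun _ : ℕ => ℝ) ⊤,
        (max (⨆ k : ℕ, |z k - 1|) 1 + ∑' k : ℕ, (2 : ℝ)⁻¹ ^ (k + 1) * |z k - 1|)) = 1 ∧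
      (⨅ z : lp (fun _ : ℕ => ℝ) ⊤,
          ((⨆ k : ℕ, |z k - 1|) + ∑' k : ℕ, (2 : ℝ)⁻¹ ^ (k + 1) * |z k - 1|)) <
        ⨅ x : ZeroAtInftyContinuousMap ℕ ℝ,
          ((⨆ k : ℕ, |x k - 1|) + ∑' k : ℕ, (2 : ℝ)⁻¹ ^ (k + 1) * |x k - 1|) := by
  have weighted_nonneg (f : ℕ → ℝ) : 0 ≤ ∑' k : ℕ, (2 : ℝ)⁻¹ ^ (k + 1) * |f k - 1| :=
    tsum_nonneg fun k => by positivity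
  have relaxed : (⨅ z : lp (fun _ : ℕ => ℝ) ⊤,
      ((⨆ k : ℕ, |z k - 1|) + ∑' k : ℕ, (2 : ℝ)⁻¹ ^ (k + 1) * |z k - 1|)) = 0 := by
    refine IsLeast.csInf_eq ⟨⟨1, by simp [lp.infty_coeFn_one]⟩, ?_⟩
    rintro _ ⟨z, rfl⟩
    exact add_nonneg (Real.iSup_nonneg fun _ => abs_nonneg _) (weighted_nonneg _)
  have reinforced : (⨅ z : lp (fun _ : ℕ => ℝ) ⊤,
      (max (⨆ k : ℕ, |z k - 1|) 1 + ∑' k : ℕ, (2 : ℝ)⁻¹ ^ (k + 1) * |z k - 1|)) = 1 := by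
    refine IsLeast.csInf_eq ⟨⟨1, by simp [lp.infty_coeFn_one]⟩, ?_⟩
    rintro _ ⟨z, rfl⟩
    exact le_add_of_le_of_nonneg (le_max_right _ _) (weighted_nonneg _)
  refine ⟨relaxed, reinforced, ?_⟩
  rw [relaxed]
  refine zero_lt_one.trans_le (le_ciInf fun x => ?_)
  simpa using le_add_of_le_of_nonneg (x.abs_le_iSup_abs_sub 1) (weighted_nonneg x)
end

section
/- Let Y be a nonreflexive real Banach space and X := Y*, so that X* = Y** and Y embeds canonically in X* via j : Y → Y**. Then there exists x_0* ∈ X* such that inf_{z ∈ X**} ( sup_{y ∈ B_Y} ⟨z, j(y)⟩ − ⟨z, x_0*⟩ ) < inf_{x ∈ X} ( ‖x‖_X − ⟨x_0*, x⟩ ), where B_Y is the closed unit ball of Y. Equivalently: if σ_{B_Y}(z) := sup_{y ∈ B_Y} ⟨z, j(y)⟩ coincides with ‖z‖_{X**} for every z ∈ X**, then Y (and hence X) is reflexive. In particular, every nonreflexive dual Banach space X carries a linear program with infinitely many constraints, (P_{x_0*}): inf (u − ⟨x_0*, x⟩) subject to ⟨x, j(y)⟩ − u ≤ 0 for all y ∈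 B_Y, (x,u) ∈ X × ℝ, exhibiting a strict gap with its biconjugate relaxation, even though the supremum of the constraint functions is continuous and the Slater condition holds. -/
/-!
Choose `p₀` in the unit ball of `Y**` outside `j(Y)`, which is a closed subspace because `j` is an
isometry and `Y` is complete. Hahn–Banach gives `z ∈ Y***` vanishing on `j(Y)` with `z p₀ = 1`,
so the left-hand infimum is at most `0 - 1`, while `‖x‖ - p₀ x ≥ 0` for every `x ∈ Y*` because
`‖p₀‖ ≤ 1`.
-/

open NormedSpace

theorem Submodule.exists_dual_eq_zero_of_notMem {E : Type*} [TopologicalSpace E] [AddCommGroup E]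
    [IsTopologicalAddGroup E] [Module ℝ E] [ContinuousSMul ℝ E] [LocallyConvexSpace ℝ E]
    {S : Submodule ℝ E} (hS : IsClosed (S : Set E)) {p : E} (hp : p ∉ S) :
    ∃ f : StrongDual ℝ E, (∀ a ∈ S, f a = 0) ∧ f p = 1 := by
  obtain ⟨f, u, hfS, hup⟩ := geometric_hahn_banach_closed_point S.convex hS hp
  -- A functional bounded above on a subspace vanishes on it: test at `(u / f a) • a`.
  have hfS_zero : ∀ a ∈ S, f a = 0 := by
    intro a ha
    by_contra hfa
    have := hfS ((u / f a) • a) (S.smul_mem _ ha)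
    rw [map_smul, smul_eq_mul, div_mul_cancel₀ u hfa] at this
    exact this.false
  have hfp : f p ≠ 0 := by linarith [hfS 0 S.zero_mem, map_zero f]
  exact ⟨(f p)⁻¹ • f, fun a ha => by simp [hfS_zero a ha], by simp [hfp]⟩

theorem Submodule.exists_norm_le_one_notMem {E : Type*} [NormedAddCommGroup E] [NormedSpace ℝ E]
    {S : Submodule ℝ E} {p : E} (hp : p ∉ S) : ∃ q, ‖q‖ ≤ 1 ∧ q ∉ S := by
  have hp0 : ‖p‖ ≠ 0 := norm_ne_zero_iff.mpr fun h => hp (h ▸ S.zero_mem)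
  refine ⟨‖p‖⁻¹ • p, ?_, by rwa [S.smul_mem_iff (inv_ne_zero hp0)]⟩
  rw [norm_smul, norm_inv, norm_norm, inv_mul_cancel₀ hp0]

theorem isClosed_range_inclusionInDoubleDual (Y : Type*) [NormedAddCommGroup Y] [NormedSpace ℝ Y]
    [CompleteSpace Y] : IsClosed (Set.range (inclusionInDoubleDual ℝ Y)) :=
  (inclusionInDoubleDualLi ℝ (E := Y)).isometry.isUniformInducing.isComplete_range.isClosed

theorem zero_le_iInf_norm_sub_apply {X : Type*} [SeminormedAddCommGroup X] [NormedSpace ℝ X]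
    {p : StrongDual ℝ X} (hp : ‖p‖ ≤ 1) : 0 ≤ ⨅ x : X, ((‖x‖ : EReal) - (p x : EReal)) := by
  refine le_iInf fun x => ?_
  rw [← EReal.coe_sub, EReal.coe_nonneg, sub_nonneg]
  calc p x ≤ ‖p‖ * ‖x‖ := (le_abs_self _).trans (p.le_opNorm x)
    _ ≤ ‖x‖ := mul_le_of_le_one_left (norm_nonneg x) hp

/-- (A gap in every nonreflexive dual space.) Let `Y` be a nonreflexive
real Banach space (the canonical embedding `j : Y → Y**` is not surjective) and
`X := Y*`. Then there exists `x₀* ∈ X*` such that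
`inf_{z ∈ X**} ( sup_{y ∈ B_Y} ⟨z, j y⟩ − ⟨z, x₀*⟩ ) < inf_{x ∈ X} ( ‖x‖ − ⟨x₀*, x⟩ )`;
that is, the linear program `(P_{x₀*})` with infinitely many constraints indexed by
`B_Y` exhibits a strict gap with its biconjugate relaxation. -/
theorem nonreflexive_dual_biconjugate_gap
    (Y : Type*) [NormedAddCommGroup Y] [NormedSpace ℝ Y] [CompleteSpace Y]
    (hY : ¬ Function.Surjective (inclusionInDoubleDual ℝ Y)) :
    ∃ p₀ : StrongDual ℝ (StrongDual ℝ Y),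
      (⨅ z : StrongDual ℝ (StrongDual ℝ (StrongDual ℝ Y)),
          ((⨆ y ∈ Metric.closedBall (0 : Y) 1,
              ((z ((inclusionInDoubleDual ℝ Y) y) : ℝ) : EReal)) - (z p₀ : EReal))) <
        ⨅ x : StrongDual ℝ Y, ((‖x‖ : EReal) - (p₀ x : EReal)) := by
  set j := inclusionInDoubleDual ℝ Y
  set S := LinearMap.range (j : Y →ₗ[ℝ] StrongDual ℝ (StrongDual ℝ Y))
  have hS : IsClosed (S : Set (StrongDual ℝ (StrongDual ℝ Y))) := by
    rw [LinearMap.coe_range]; exact isClosed_range_inclusionInDoubleDual Y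
  obtain ⟨p, hp⟩ : ∃ p, p ∉ S := by
    simpa [S, Function.Surjective] using hY
  obtain ⟨p₀, hp₀_norm, hp₀⟩ :=
    Submodule.exists_norm_le_one_notMem (E := StrongDual ℝ (StrongDual ℝ Y)) hp
  obtain ⟨z, hz_range, hz_p₀⟩ := S.exists_dual_eq_zero_of_notMem hS hp₀
  have hz_sup : ⨆ y ∈ Metric.closedBall (0 : Y) 1, ((z (j y) : ℝ) : EReal) = 0 := by
    simp only [fun y => hz_range (j y) (LinearMap.mem_range_self _ y), EReal.coe_zero]
    exact biSup_const ⟨0, Metric.mem_closedBall_self zero_le_one⟩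
  refine ⟨p₀, ?_⟩
  calc _ ≤ (0 : EReal) - (1 : ℝ) := iInf_le_of_le z (by rw [hz_sup, hz_p₀])
    _ < 0 := by norm_num
    _ ≤ _ := zero_le_iInf_norm_sub_apply hp₀_norm
end

section
/- Let T be a compact topological space and {f_t : t ∈ T} a concave-like family of proper convex lower semicontinuous functions on X, set f := sup_{t ∈ T} f_t, and assume dom f ≠ ∅ and that for every x ∈ dom f the map t ↦ f_t(x) is upper semicontinuous on T. Let f_0 : X → ℝ ∪ {+∞} be proper convex, and suppose the problem (P): inf f_0(x) subject to f_t(x) ≤ 0 for all t ∈ T, x ∈ X, has finite optimal value v(P) ∈ ℝ and satisfies the Slater condition (there exists x_0 ∈ dom f_0 with sup_{t∈T} f_t(x_0) < 0). Then v(P) = max_{t ∈ T, λ ≥ 0} inf_{x ∈ dom f} ( f_0(x) + λ f_t(x) ), the maximum over (t, λ) ∈ T × [0, +∞) being attained. -/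
open Filter Topology Set NormedSpace
open scoped Classical

noncomputable section

variable {X : Type*} [NormedAddCommGroup X] [NormedSpace ℝ X]

/-- A family `{f_t : t ∈ T}` is concave-like if every (finite) nonnegative combination of
members of the family is dominated by a multiple of a member, with the convention
`0·(+∞) = +∞`. -/
def ConcaveLike {X : Type*} [NormedAddCommGroup X] [NormedSpace ℝ X]
    {T : Type*} (f : T → X → EReal) : Prop :=
  ∀ (m : ℕ) (t : Fin m → T) (lam : Fin m → ℝ), (∀ k, 0 ≤ lam k) →
    ∃ t₀ : T, ∀ x : X,
      (∑ k, smulInf (lam k) (f (t k) x)) ≤ smulInf (∑ k, lam k) (f t₀ x)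

/-!
Write `f := sup_t f_t`. The pairs `(a, s)` with `f₀ x ≤ a` and `f x ≤ s` for some `x` form a
convex subset of `ℝ²`, and every pair with `s ≤ 0` has `a ≥ v(P)`. The Slater point bounds the
slopes `(v(P) - a) / s` over `s > 0`, and their supremum `μ` is a Lagrange multiplier:
`v(P) ≤ f₀ x + μ f x` on `dom f`.

It remains to replace `μ f` by `μ f_t` for a single `t`. Otherwise, upper semicontinuity and
compactness of `T` give finitely many points `x_i` and a uniform gap `w < v(P)` such that every
`t` has some `i` with `f₀ x_i + μ f_t x_i ≤ w`. Concave-likeness makes the set of vectors lying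
below some `(f₀ x_i + μ f_t x_i)_i` convex, and separating it from the open orthant above `w`
yields convex weights `c` with `∑ c_i (f₀ x_i + μ f_t x_i) ≤ w` for every `t`. By convexity, the
point `∑ c_i x_i` then violates the multiplier inequality.
-/

theorem smulInf_of_ne_top {v : EReal} (hv : v ≠ ⊤) (a : ℝ) : smulInf a v = a * v := if_neg hv

theorem smulInf_one (v : EReal) : smulInf 1 v = v := by
  by_cases hv : v = ⊤
  · simp [smulInf, hv]
  · simp [smulInf_of_ne_top hv]

theorem smulInf_nonpos {a : ℝ} {v : EReal} (ha : 0 ≤ a) (hv : v ≤ 0) : smulInf a v ≤ 0 := by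
  rw [smulInf_of_ne_top (ne_top_of_le_ne_top EReal.zero_ne_top hv)]
  exact mul_nonpos_of_nonneg_of_nonpos (EReal.coe_nonneg.2 ha) hv

theorem coe_le_add_smulInf {y z : EReal} (hy : y ≠ ⊥) (hz : z ≠ ⊥) (hz' : z ≠ ⊤) {v μ : ℝ}
    (h : ∀ a b : ℝ, y ≤ a → z ≤ b → v ≤ a + μ * b) : (v : EReal) ≤ y + smulInf μ z := by
  lift z to ℝ using ⟨hz', hz⟩
  rw [smulInf_of_ne_top hz']
  by_cases hy' : y = ⊤
  · simp [hy', ← EReal.coe_mul]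
  lift y to ℝ using ⟨hy', hy⟩
  exact_mod_cast h y z le_rfl le_rfl

theorem ConvexER.apply_add_le {g : X → EReal} (hg : ConvexER g) {x y : X} {p q a b : ℝ}
    (hxp : g x ≤ p) (hyq : g y ≤ q) (ha : 0 ≤ a) (hb : 0 ≤ b) (hab : a + b = 1) :
    g (a • x + b • y) ≤ ↑(a * p + b * q) :=
  calc g (a • x + b • y) ≤ a * g x + b * g y := hg x y a b ha hb hab
    _ ≤ a * p + b * q := add_le_add (mul_le_mul_of_nonneg_left hxp (EReal.coe_nonneg.2 ha))
        (mul_le_mul_of_nonneg_left hyq (EReal.coe_nonneg.2 hb))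
    _ = ↑(a * p + b * q) := by norm_cast

theorem ConvexER.convex_epigraph {g : X → EReal} (hg : ConvexER g) :
    Convex ℝ {z : X × ℝ | g z.1 ≤ z.2} :=
  fun _ hz _ hz' _ _ ha hb hab => hg.apply_add_le hz hz' ha hb hab

theorem ConvexER.apply_sum_le {g : X → EReal} (hg : ConvexER g) {ι : Type*} (s : Finset ι)
    {w : ι → ℝ} {z : ι → X} {r : ι → ℝ} (hw₀ : ∀ i ∈ s, 0 ≤ w i) (hw₁ : ∑ i ∈ s, w i = 1)
    (hr : ∀ i ∈ s, g (z i) ≤ r i) : g (∑ i ∈ s, w i • z i) ≤ ↑(∑ i ∈ s, w i * r i) := by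
  simpa [Prod.fst_sum, Prod.snd_sum] using
    hg.convex_epigraph.sum_mem hw₀ hw₁ (z := fun i => (z i, r i)) hr

theorem ConcaveLike.exists_smulInf_add_smulInf_le {T : Type*} {f : T → X → EReal}
    (hf : ConcaveLike f) (t₁ t₂ : T) {α β : ℝ} (hα : 0 ≤ α) (hβ : 0 ≤ β) (hαβ : α + β = 1) :
    ∃ t₀, ∀ x, smulInf α (f t₁ x) + smulInf β (f t₂ x) ≤ f t₀ x := by
  obtain ⟨t₀, h⟩ := hf 2 ![t₁, t₂] ![α, β] (Fin.forall_fin_two.2 ⟨hα, hβ⟩)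
  exact ⟨t₀, fun x => by simpa [Fin.sum_univ_two, hαβ, smulInf_one] using h x⟩

theorem exists_nonneg_forall_le_add_mul {P : Set (ℝ × ℝ)} (hP : Convex ℝ P) {v : ℝ}
    (hfeas : ∀ p ∈ P, p.2 ≤ 0 → v ≤ p.1) (hslater : ∃ p ∈ P, p.2 < 0) :
    ∃ μ : ℝ, 0 ≤ μ ∧ ∀ p ∈ P, v ≤ p.1 + μ * p.2 := by
  have hslope : ∀ p ∈ P, ∀ q ∈ P, p.2 < 0 → 0 < q.2 → (v - q.1) / q.2 ≤ (p.1 - v) / -p.2 := by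
    intro p hp q hq hp2 hq2
    have hd : 0 < q.2 - p.2 := by linarith
    have hab : q.2 / (q.2 - p.2) + -p.2 / (q.2 - p.2) = 1 := by field_simp; ring
    have hmem := hP hp hq (div_nonneg hq2.le hd.le) (div_nonneg (neg_nonneg.2 hp2.le) hd.le) hab
    have hcross : ((q.2 / (q.2 - p.2)) • p + (-p.2 / (q.2 - p.2)) • q).2 = 0 := by
      simp only [Prod.snd_add, Prod.smul_snd, smul_eq_mul]
      field_simp
      ring
    have hv := hfeas _ hmem hcross.le
    simp only [Prod.fst_add, Prod.smul_fst, smul_eq_mul] at hv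
    rw [div_le_div_iff₀ hq2 (neg_pos.2 hp2)]
    field_simp at hv
    nlinarith
  obtain ⟨p₀, hp₀, hp₀2⟩ := hslater
  set M : Set ℝ := {m | ∃ q ∈ P, 0 < q.2 ∧ m = (v - q.1) / q.2}
  have hM : BddAbove M := ⟨(p₀.1 - v) / -p₀.2, by
    rintro _ ⟨q, hq, hq2, rfl⟩; exact hslope p₀ hp₀ q hq hp₀2 hq2⟩
  refine ⟨max 0 (sSup M), le_max_left _ _, fun p hp => ?_⟩
  rcases lt_trichotomy p.2 0 with h | h | h
  · have hv := hfeas p hp h.le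
    have hbound : 0 ≤ (p.1 - v) / -p.2 := div_nonneg (by linarith) (by linarith)
    have : max 0 (sSup M) ≤ (p.1 - v) / -p.2 := max_le hbound <| Real.sSup_le
      (by rintro _ ⟨q, hq, hq2, rfl⟩; exact hslope p hp q hq h hq2) hbound
    rw [le_div_iff₀ (neg_pos.2 h)] at this
    linarith
  · rw [h, mul_zero, add_zero]
    exact hfeas p hp h.le
  · have : (v - p.1) / p.2 ≤ max 0 (sSup M) :=
      (le_csSup hM ⟨p, hp, h, rfl⟩).trans (le_max_right _ _)
    rw [div_le_iff₀ h] at this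
    linarith

theorem exists_finset_forall_exists_lt_sub {ι T : Type*} [TopologicalSpace T] [CompactSpace T]
    {g : ι → T → EReal} (hg : ∀ i, UpperSemicontinuous (g i)) (c : ι → ℝ)
    (h : ∀ t, ∃ i, g i t < c i) :
    ∃ (s : Finset ι) (ε : ℝ), 0 < ε ∧ ∀ t, ∃ i ∈ s, g i t < ↑(c i - ε) := by
  let U : ι × ℕ → Set T := fun p => g p.1 ⁻¹' Iio ↑(c p.1 - 1 / (p.2 + 1))
  have hU : ∀ p, IsOpen (U p) := fun p => upperSemicontinuous_iff_isOpen_preimage.1 (hg p.1) _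
  have hcover : univ ⊆ ⋃ p, U p := fun t _ => by
    obtain ⟨i, hi⟩ := h t
    obtain ⟨r, hr, hrc⟩ := EReal.lt_iff_exists_real_btwn.1 hi
    obtain ⟨n, hn⟩ := exists_nat_one_div_lt (sub_pos.2 (EReal.coe_lt_coe_iff.1 hrc))
    exact mem_iUnion.2 ⟨(i, n), hr.trans (EReal.coe_lt_coe_iff.2 (by linarith))⟩
  obtain ⟨s, hs⟩ := isCompact_univ.elim_finite_subcover U hU hcover
  refine ⟨s.image Prod.fst, 1 / (s.sup Prod.snd + 1), by positivity, fun t => ?_⟩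
  obtain ⟨p, hp, ht⟩ := mem_iUnion₂.1 (hs (mem_univ t))
  refine ⟨p.1, Finset.mem_image_of_mem _ hp, ht.trans_le (EReal.coe_le_coe_iff.2 ?_)⟩
  have := Finset.le_sup (f := Prod.snd) hp
  gcongr

theorem LinearMap.apply_single_nonpos_of_forall_lt {ι : Type*} [DecidableEq ι]
    (φ : (ι → ℝ) →ₗ[ℝ] ℝ) {w u : ℝ} (h : ∀ y : ι → ℝ, (∀ i, w < y i) → φ y < u) (i : ι) :
    φ (Pi.single i 1) ≤ 0 := by
  by_contra! hi
  set r := (u - φ (fun _ => w + 1)) / φ (Pi.single i 1)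
  have hr : 0 ≤ r := div_nonneg (sub_nonneg.2 (h _ fun _ => by linarith).le) hi.le
  have := h ((fun _ => w + 1) + r • Pi.single i 1) fun j => by
    have : 0 ≤ r * Pi.single (M := fun _ => ℝ) i 1 j :=
      mul_nonneg hr (by rw [Pi.single_apply]; split_ifs <;> norm_num)
    simp only [Pi.add_apply, Pi.smul_apply, smul_eq_mul]
    linarith
  rw [map_add, map_smul, smul_eq_mul, div_mul_cancel₀ _ hi.ne'] at this
  linarith

theorem exists_mem_stdSimplex_forall_sum_mul_le {ι T : Type*} [Fintype ι] [Nonempty T]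
    (g : T → ι → ℝ) (w : ℝ)
    (hg : ∀ t₁ t₂ (α β : ℝ), 0 ≤ α → 0 ≤ β → α + β = 1 → ∃ t₀, α • g t₁ + β • g t₂ ≤ g t₀)
    (hw : ∀ t, ∃ i, g t i ≤ w) :
    ∃ c ∈ stdSimplex ℝ ι, ∀ t, ∑ i, c i * g t i ≤ w := by
  set S : Set (ι → ℝ) := {y | ∃ t, y ≤ g t}
  set Q : Set (ι → ℝ) := Set.pi univ fun _ => Ioi w
  have hS : Convex ℝ S := by
    rintro _ ⟨t₁, h₁⟩ _ ⟨t₂, h₂⟩ α β hα hβ hαβ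
    obtain ⟨t₀, h⟩ := hg t₁ t₂ α β hα hβ hαβ
    exact ⟨t₀, (add_le_add (smul_le_smul_of_nonneg_left h₁ hα)
      (smul_le_smul_of_nonneg_left h₂ hβ)).trans h⟩
  have hdisj : Disjoint Q S := by
    refine disjoint_left.2 fun y hy ⟨t, ht⟩ => ?_
    obtain ⟨i, hi⟩ := hw t
    exact (hy i (mem_univ i)).not_ge ((ht i).trans hi)
  obtain ⟨φ, u, hφQ, hφS⟩ := geometric_hahn_banach_open (convex_pi fun _ _ => convex_Ioi w)
    (isOpen_set_pi finite_univ fun _ _ => isOpen_Ioi) hS hdisj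
  set c : ι → ℝ := fun i => -φ (Pi.single i 1)
  have hφ : ∀ y, φ y = -∑ i, c i * y i := fun y => by
    conv_lhs => rw [pi_eq_sum_univ' y]
    simp [c, mul_comm]
  have hφ_corner : φ (fun _ => w + 1) < u := hφQ _ fun _ _ => by simp
  have hc : ∀ i, 0 ≤ c i := fun i => neg_nonneg.2 <|
    φ.toLinearMap.apply_single_nonpos_of_forall_lt (fun y hy => hφQ y fun i _ => hy i) i
  obtain ⟨t₀⟩ := ‹Nonempty T›
  have hC : 0 < ∑ i, c i := by
    refine (Finset.sum_nonneg fun i _ => hc i).lt_of_ne fun h₀ => ?_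
    have hc₀ : ∀ i, c i = 0 := fun i =>
      (Finset.sum_eq_zero_iff_of_nonneg fun i _ => hc i).1 h₀.symm i (Finset.mem_univ i)
    have := hφS (g t₀) ⟨t₀, le_rfl⟩
    simp only [hφ, hc₀, zero_mul, Finset.sum_const_zero, neg_zero] at this hφ_corner
    linarith
  have hφ_diag : φ (fun _ => w) ≤ u := by
    have hmem : (fun _ => w) ∈ closure Q := by
      rw [closure_pi_set]
      exact fun i _ => by rw [closure_Ioi]; exact self_mem_Ici
    exact closure_minimal (fun y hy => (hφQ y hy).le)
      (isClosed_le φ.continuous continuous_const) hmem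
  rw [hφ, ← Finset.sum_mul] at hφ_diag
  refine ⟨fun i => c i / ∑ j, c j,
    ⟨fun i => div_nonneg (hc i) hC.le, by rw [← Finset.sum_div, div_self hC.ne']⟩, fun t => ?_⟩
  have := hφS (g t) ⟨t, le_rfl⟩
  rw [hφ] at this
  simp_rw [div_mul_eq_mul_div, ← Finset.sum_div]
  rw [div_le_iff₀ hC]
  linarith

theorem ne_top_of_mem_edom_iSup {Y T : Type*} {f : T → Y → EReal} {x : Y}
    (hx : x ∈ edom (fun x => ⨆ t, f t x)) (t : T) : f t x ≠ ⊤ :=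
  ne_top_of_le_ne_top hx (le_iSup (f · x) t)

theorem coe_toReal_of_mem_edom_iSup {Y T : Type*} {f : T → Y → EReal}
    (hfb : ∀ t x, f t x ≠ ⊥) {x : Y} (hx : x ∈ edom (fun x => ⨆ t, f t x)) (t : T) :
    ((f t x).toReal : EReal) = f t x :=
  EReal.coe_toReal (ne_top_of_mem_edom_iSup hx t) (hfb t x)

theorem iInf_add_smulInf_le_iInf {Y T : Type*} {f : T → Y → EReal} (f₀ : Y → EReal) (t : T)
    {lam : ℝ} (hlam : 0 ≤ lam) :
    (⨅ x ∈ edom (fun y => ⨆ s, f s y), (f₀ x + smulInf lam (f t x))) ≤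
      ⨅ x ∈ {x : Y | ∀ s, f s x ≤ 0}, f₀ x :=
  le_iInf₂ fun x hx => (iInf₂_le x (ne_top_of_le_ne_top EReal.zero_ne_top (iSup_le hx))).trans
    (add_le_of_nonpos_right (smulInf_nonpos hlam (hx t)))

section Duality

variable {T : Type*} {f : T → X → EReal} {f₀ : X → EReal}

theorem ConcaveLike.exists_toReal_add_toReal_le (hconc : ConcaveLike f) (hfb : ∀ t x, f t x ≠ ⊥)
    (t₁ t₂ : T) {α β : ℝ} (hα : 0 ≤ α) (hβ : 0 ≤ β) (hαβ : α + β = 1) :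
    ∃ t₀, ∀ x ∈ edom (fun x => ⨆ t, f t x),
      α * (f t₁ x).toReal + β * (f t₂ x).toReal ≤ (f t₀ x).toReal := by
  obtain ⟨t₀, h⟩ := hconc.exists_smulInf_add_smulInf_le t₁ t₂ hα hβ hαβ
  refine ⟨t₀, fun x hx => ?_⟩
  have := h x
  rw [← coe_toReal_of_mem_edom_iSup hfb hx t₁, ← coe_toReal_of_mem_edom_iSup hfb hx t₂,
    ← coe_toReal_of_mem_edom_iSup hfb hx t₀, smulInf_of_ne_top (EReal.coe_ne_top _),
    smulInf_of_ne_top (EReal.coe_ne_top _)] at this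
  exact_mod_cast this

theorem exists_multiplier_of_slater (hfc : ∀ t, ConvexER (f t)) (hf₀c : ConvexER f₀) {v : ℝ}
    (hv : ∀ x, (∀ t, f t x ≤ 0) → (v : EReal) ≤ f₀ x)
    (hslater : ∃ x₀, f₀ x₀ ≠ ⊤ ∧ (⨆ t, f t x₀) < 0) :
    ∃ μ : ℝ, 0 ≤ μ ∧ ∀ x (a s : ℝ), f₀ x ≤ a → (∀ t, f t x ≤ s) → v ≤ a + μ * s := by
  set P : Set (ℝ × ℝ) := {p | ∃ x, f₀ x ≤ p.1 ∧ ∀ t, f t x ≤ p.2}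
  have hP : Convex ℝ P := by
    rintro _ ⟨x, hx₀, hx⟩ _ ⟨y, hy₀, hy⟩ a b ha hb hab
    exact ⟨a • x + b • y, hf₀c.apply_add_le hx₀ hy₀ ha hb hab,
      fun t => (hfc t).apply_add_le (hx t) (hy t) ha hb hab⟩
  have hfeas : ∀ p ∈ P, p.2 ≤ 0 → v ≤ p.1 := by
    rintro p ⟨x, hx₀, hx⟩ hp
    exact_mod_cast (hv x fun t => (hx t).trans (by exact_mod_cast hp)).trans hx₀
  have hP₀ : ∃ p ∈ P, p.2 < 0 := by
    obtain ⟨x₀, hx₀, hlt⟩ := hslater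
    obtain ⟨a, ha, -⟩ := EReal.lt_iff_exists_real_btwn.1 (lt_top_iff_ne_top.2 hx₀)
    obtain ⟨s, hs, hs₀⟩ := EReal.lt_iff_exists_real_btwn.1 hlt
    exact ⟨(a, s), ⟨x₀, ha.le, fun t => (le_iSup (f · x₀) t).trans hs.le⟩,
      by exact_mod_cast hs₀⟩
  obtain ⟨μ, hμ, h⟩ := exists_nonneg_forall_le_add_mul hP hfeas hP₀
  exact ⟨μ, hμ, fun x a s ha hs => h (a, s) ⟨x, ha, hs⟩⟩

theorem le_of_forall_sum_mul_le_of_multiplier (hfb : ∀ t x, f t x ≠ ⊥)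
    (hfc : ∀ t, ConvexER (f t)) (hf₀c : ConvexER f₀) {v μ : ℝ} (hμ : 0 < μ)
    (hmul : ∀ x (a s : ℝ), f₀ x ≤ a → (∀ t, f t x ≤ s) → v ≤ a + μ * s)
    {ι : Type*} [Fintype ι] {c : ι → ℝ} (hc : c ∈ stdSimplex ℝ ι) {x : ι → X} {a : ι → ℝ}
    (hx : ∀ i, x i ∈ edom (fun x => ⨆ t, f t x)) (ha : ∀ i, f₀ (x i) ≤ a i) {w : ℝ}
    (hw : ∀ t, ∑ i, c i * (a i + μ * (f t (x i)).toReal) ≤ w) : v ≤ w := by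
  set A := ∑ i, c i * a i
  have h₀ : f₀ (∑ i, c i • x i) ≤ A :=
    hf₀c.apply_sum_le _ (fun i _ => hc.1 i) hc.2 fun i _ => ha i
  have ht : ∀ t, f t (∑ i, c i • x i) ≤ ↑((w - A) / μ) := fun t => by
    refine ((hfc t).apply_sum_le _ (fun i _ => hc.1 i) hc.2 fun i _ =>
      (coe_toReal_of_mem_edom_iSup hfb (hx i) t).ge).trans ?_
    refine EReal.coe_le_coe_iff.2 ((le_div_iff₀ hμ).2 ?_)
    have hsplit : ∑ i, c i * (a i + μ * (f t (x i)).toReal) =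
        A + (∑ i, c i * (f t (x i)).toReal) * μ := by
      simp only [mul_add, Finset.sum_add_distrib, Finset.sum_mul]
      exact congrArg _ (Finset.sum_congr rfl fun i _ => by ring)
    linarith [hw t]
  have := hmul _ _ _ h₀ ht
  rwa [mul_div_cancel₀ _ hμ.ne', add_sub_cancel] at this

variable [TopologicalSpace T] [CompactSpace T] [Nonempty T]

theorem exists_index_multiplier_of_pos (hfb : ∀ t x, f t x ≠ ⊥) (hfc : ∀ t, ConvexER (f t))
    (hconc : ConcaveLike f)
    (husc : ∀ x ∈ edom (fun x => ⨆ t, f t x), UpperSemicontinuous (fun t => f t x))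
    (hf₀c : ConvexER f₀) {v μ : ℝ} (hμ : 0 < μ)
    (hmul : ∀ x (a s : ℝ), f₀ x ≤ a → (∀ t, f t x ≤ s) → v ≤ a + μ * s) :
    ∃ t₀, ∀ x ∈ edom (fun x => ⨆ t, f t x), ∀ a b : ℝ, f₀ x ≤ a → f t₀ x ≤ b →
      v ≤ a + μ * b := by
  by_contra! hcon
  let ι := {p : X × ℝ // p.1 ∈ edom (fun x => ⨆ t, f t x) ∧ f₀ p.1 ≤ p.2}
  obtain ⟨s, ε, hε, hs⟩ := exists_finset_forall_exists_lt_sub (g := fun (i : ι) t => f t i.1.1)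
    (fun i => husc _ i.2.1) (fun i => (v - i.1.2) / μ) fun t => by
      obtain ⟨x, hx, a, b, ha, hb, hlt⟩ := hcon t
      exact ⟨⟨(x, a), hx, ha⟩, hb.trans_lt (EReal.coe_lt_coe_iff.2 (by
        rw [lt_div_iff₀ hμ]; linarith))⟩
  set x : s → X := fun i => i.1.1.1
  set a : s → ℝ := fun i => i.1.1.2
  have hx : ∀ i, x i ∈ edom (fun x => ⨆ t, f t x) := fun i => i.1.2.1
  have hcover : ∀ t, ∃ i, a i + μ * (f t (x i)).toReal ≤ v - μ * ε := by
    intro t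
    obtain ⟨i, hi, ht⟩ := hs t
    rw [← coe_toReal_of_mem_edom_iSup hfb i.2.1 t, EReal.coe_lt_coe_iff, lt_sub_iff_add_lt,
      lt_div_iff₀ hμ] at ht
    exact ⟨⟨i, hi⟩, by nlinarith⟩
  obtain ⟨c, hc, hcw⟩ := exists_mem_stdSimplex_forall_sum_mul_le
    (fun t i => a i + μ * (f t (x i)).toReal) (v - μ * ε) (fun t₁ t₂ α β hα hβ hαβ => by
      obtain ⟨t₀, h⟩ := hconc.exists_toReal_add_toReal_le hfb t₁ t₂ hα hβ hαβ
      refine ⟨t₀, fun i => ?_⟩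
      have ha : α * a i + β * a i = a i := by rw [← add_mul, hαβ, one_mul]
      simp only [Pi.add_apply, Pi.smul_apply, smul_eq_mul]
      linarith [mul_le_mul_of_nonneg_left (h _ (hx i)) hμ.le]) hcover
  have := le_of_forall_sum_mul_le_of_multiplier hfb hfc hf₀c hμ hmul hc hx (fun i => i.1.2.2) hcw
  linarith [mul_pos hμ hε]

theorem exists_index_multiplier (hfb : ∀ t x, f t x ≠ ⊥) (hfc : ∀ t, ConvexER (f t))
    (hconc : ConcaveLike f)
    (husc : ∀ x ∈ edom (fun x => ⨆ t, f t x), UpperSemicontinuous (fun t => f t x))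
    (hf₀c : ConvexER f₀) {v μ : ℝ} (hμ : 0 ≤ μ)
    (hmul : ∀ x (a s : ℝ), f₀ x ≤ a → (∀ t, f t x ≤ s) → v ≤ a + μ * s) :
    ∃ t₀, ∀ x ∈ edom (fun x => ⨆ t, f t x), ∀ a b : ℝ, f₀ x ≤ a → f t₀ x ≤ b →
      v ≤ a + μ * b := by
  obtain rfl | hμ := hμ.eq_or_lt
  · obtain ⟨t₀⟩ := ‹Nonempty T›
    refine ⟨t₀, fun x hx a b ha _ => ?_⟩
    have hsup : (⨆ t, f t x) ≠ ⊥ := ne_bot_of_le_ne_bot (hfb t₀ x) (le_iSup (f · x) t₀)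
    lift (⨆ t, f t x) to ℝ using ⟨hx, hsup⟩ with s hs
    simpa using hmul x a s ha fun t => hs ▸ le_iSup (f · x) t
  · exact exists_index_multiplier_of_pos hfb hfc hconc husc hf₀c hμ hmul

end Duality

theorem value_eq_max_lagrangian_concaveLike_general
    {X : Type*} [NormedAddCommGroup X] [NormedSpace ℝ X]
    {T : Type*} [TopologicalSpace T] [CompactSpace T] [Nonempty T]
    (f : T → X → EReal)
    (hfp : ∀ t, ProperER (f t)) (hfc : ∀ t, ConvexER (f t))
    (hconc : ConcaveLike f)
    (husc : ∀ x ∈ edom (fun x => ⨆ t, f t x), UpperSemicontinuous (fun t => f t x))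
    (f₀ : X → EReal) (hf₀p : ProperER f₀) (hf₀c : ConvexER f₀)
    (hreal : ∃ r : ℝ, (⨅ x ∈ {x : X | ∀ t, f t x ≤ 0}, f₀ x) = (r : EReal))
    (hslater : ∃ x₀, f₀ x₀ ≠ ⊤ ∧ (⨆ t, f t x₀) < 0) :
    ∃ (t : T) (lam : ℝ), 0 ≤ lam ∧
      (⨅ x ∈ {x : X | ∀ s, f s x ≤ 0}, f₀ x) =
        (⨅ x ∈ edom (fun y => ⨆ s, f s y), (f₀ x + smulInf lam (f t x))) ∧
      ∀ (t' : T) (lam' : ℝ), 0 ≤ lam' →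
        (⨅ x ∈ edom (fun y => ⨆ s, f s y), (f₀ x + smulInf lam' (f t' x))) ≤
          ⨅ x ∈ {x : X | ∀ s, f s x ≤ 0}, f₀ x := by
  obtain ⟨v, hv⟩ := hreal
  obtain ⟨μ, hμ, hmul⟩ :=
    exists_multiplier_of_slater hfc hf₀c (fun x hx => hv ▸ iInf₂_le x hx) hslater
  obtain ⟨t, ht⟩ := exists_index_multiplier (fun t => (hfp t).2) hfc hconc husc hf₀c hμ hmul
  refine ⟨t, μ, hμ, le_antisymm ?_ (iInf_add_smulInf_le_iInf f₀ t hμ),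
    fun t' _ hlam' => iInf_add_smulInf_le_iInf f₀ t' hlam'⟩
  rw [hv]
  exact le_iInf₂ fun x hx => coe_le_add_smulInf (hf₀p.2 x) ((hfp t).2 x)
    (ne_top_of_mem_edom_iSup hx t) (ht x hx)

/-- (Lagrangian duality in the concave-like setting.) Let `T` be a
compact space, `{f_t}` a concave-like family of proper convex lsc functions with
`dom f ≠ ∅` (`f := sup_t f_t`) and `t ↦ f_t(x)` upper semicontinuous for each
`x ∈ dom f`. If `(P)` has finite value and satisfies the Slater condition, then
`v(P) = max_{t ∈ T, λ ≥ 0} inf_{x ∈ dom f} ( f₀(x) + λ f_t(x) )`, the maximum being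
attained; here `0·(+∞) = +∞`, so `0·f_t = I_{dom f_t}`. -/
theorem value_eq_max_lagrangian_concaveLike
    {X : Type*} [NormedAddCommGroup X] [NormedSpace ℝ X] [CompleteSpace X]
    {T : Type*} [TopologicalSpace T] [CompactSpace T] [Nonempty T]
    (f : T → X → EReal)
    (hfp : ∀ t, ProperER (f t)) (hfc : ∀ t, ConvexER (f t))
    (hflsc : ∀ t, LowerSemicontinuous (f t))
    (hconc : ConcaveLike f)
    (hdom : (edom (fun x => ⨆ t, f t x)).Nonempty)
    (husc : ∀ x ∈ edom (fun x => ⨆ t, f t x), UpperSemicontinuous (fun t => f t x))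
    (f₀ : X → EReal) (hf₀p : ProperER f₀) (hf₀c : ConvexER f₀)
    (hreal : ∃ r : ℝ, (⨅ x ∈ {x : X | ∀ t, f t x ≤ 0}, f₀ x) = (r : EReal))
    (hslater : ∃ x₀, f₀ x₀ ≠ ⊤ ∧ (⨆ t, f t x₀) < 0) :
    ∃ (t : T) (lam : ℝ), 0 ≤ lam ∧
      (⨅ x ∈ {x : X | ∀ s, f s x ≤ 0}, f₀ x) =
        (⨅ x ∈ edom (fun y => ⨆ s, f s y), (f₀ x + smulInf lam (f t x))) ∧
      ∀ (t' : T) (lam' : ℝ), 0 ≤ lam' →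
        (⨅ x ∈ edom (fun y => ⨆ s, f s y), (f₀ x + smulInf lam' (f t' x))) ≤
          ⨅ x ∈ {x : X | ∀ s, f s x ≤ 0}, f₀ x :=
  value_eq_max_lagrangian_concaveLike_general f hfp hfc hconc husc f₀ hf₀p hf₀c hreal hslater
end
end
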